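/- arXiv:math/0111156 — 2 statements merged into one kernel-verified Lean document; each statement's English description precedes it below -/
import Mathlib

section
/- Let L be a finite graded lattice of rank n with an S_n EL-labeling, let m be a maximal chain, and let Q_m be the subposet of L consisting of all elements lying on some chain in the U-closure M_m of m. Then the label permutations of the chains in M_m are exactly the permutations ω with ω ≤_R ω_m in right weak order, each occurring exactly once. -/
/-! Common definitions: graded posets, saturated/maximal chains, EL-labelings,
inversions and weak order on permutations, descent operators, flag vectors. -/

section Perm

/-- The inversion set `INV(v) = {(v j, v i) : i < j, v i > v j}` of a permutation of `Fin n`. -/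
def invSet {n : ℕ} (v : Equiv.Perm (Fin n)) : Set (Fin n × Fin n) :=
  {p | ∃ i j : Fin n, i < j ∧ v j = p.1 ∧ v i = p.2 ∧ v j < v i}

/-- The number of inversions of a permutation. -/
noncomputable def invCount {n : ℕ} (v : Equiv.Perm (Fin n)) : ℕ :=
  (invSet v).ncard

/-- The adjacent transposition swapping `i` and `i+1` (0-indexed) in `Fin n`
(junk value `1` if out of range). -/
def adjSwap (n : ℕ) (i : ℕ) : Equiv.Perm (Fin n) :=
  if h : i + 1 < n then Equiv.swap ⟨i, Nat.lt_of_succ_lt h⟩ ⟨i + 1, h⟩ else 1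

/-- One step of the right weak order: `v` is obtained from `w` by multiplying on the
right by an adjacent transposition which removes exactly one inversion. -/
def weakStep {n : ℕ} (w v : Equiv.Perm (Fin n)) : Prop :=
  ∃ i : ℕ, i + 1 < n ∧ v = w * adjSwap n i ∧ invCount v + 1 = invCount w

/-- Right weak order: `v ≤_R w` iff `v` is obtained from `w` by a sequence of
inversion-removing right multiplications by adjacent transpositions. -/
def leRW {n : ℕ} (v w : Equiv.Perm (Fin n)) : Prop :=
  Relation.ReflTransGen weakStep w v

end Perm

section Posets

variable {P : Type*}

/-- `c` (an `ℕ`-indexed sequence, constant equal to `y` from index `k` on) is a saturated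
chain `x = c 0 ⋖ c 1 ⋖ ⋯ ⋖ c k = y` of length `k` from `x` to `y`. -/
def IsSatChain [PartialOrder P] (k : ℕ) (c : ℕ → P) (x y : P) : Prop :=
  c 0 = x ∧ (∀ j, k ≤ j → c j = y) ∧ ∀ j, j < k → c j ⋖ c (j + 1)

/-- The chain `c` of length `k` has (weakly) increasing labels. -/
def IncreasingChain [PartialOrder P] (lab : P → P → ℤ) (k : ℕ) (c : ℕ → P) : Prop :=
  ∀ j, j + 1 < k → lab (c j) (c (j + 1)) ≤ lab (c (j + 1)) (c (j + 2))

/-- The label word of length-`k` chain `c` lexicographically strictly precedes that of `d`. -/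
def LexLt [PartialOrder P] (lab : P → P → ℤ) (k : ℕ) (c d : ℕ → P) : Prop :=
  ∃ i < k, (∀ j, j < i → lab (c j) (c (j + 1)) = lab (d j) (d (j + 1))) ∧
    lab (c i) (c (i + 1)) < lab (d i) (d (i + 1))

/-- `lab` is an EL-labeling: in every interval `[x,y]` (containing a saturated chain of
length `k`), there is a unique maximal chain with increasing labels, and it is
lexicographically strictly smaller than every other maximal chain of the interval. -/
def IsELLabeling [PartialOrder P] (lab : P → P → ℤ) : Prop :=
  ∀ x y : P, x < y → ∀ k : ℕ, (∃ c, IsSatChain k c x y) →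
    (∃! c, IsSatChain k c x y ∧ IncreasingChain lab k c) ∧
    ∀ c d, IsSatChain k c x y → IncreasingChain lab k c → IsSatChain k d x y → c ≠ d →
      LexLt lab k c d

/-- `rk` is a rank function making `P` a graded poset of rank `n`, with `rk ⊥ = 0`,
`rk ⊤ = n`, and ranks increasing by one along covers. -/
def IsGraded [PartialOrder P] [BoundedOrder P] (n : ℕ) (rk : P → ℕ) : Prop :=
  rk (⊥ : P) = 0 ∧ rk (⊤ : P) = n ∧ ∀ x y : P, x ⋖ y → rk y = rk x + 1

/-- `lab` is an `S_n` EL-labeling: an EL-labeling such that the label word of every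
maximal chain of `P` is a permutation of `{1, …, n}`. -/
def IsSnELLabeling [PartialOrder P] [BoundedOrder P] (n : ℕ) (lab : P → P → ℤ) : Prop :=
  IsELLabeling lab ∧
    ∀ c : ℕ → P, IsSatChain n c ⊥ ⊤ →
      ∃ σ : Equiv.Perm (Fin n), ∀ j : Fin n, lab (c j) (c ((j : ℕ) + 1)) = ((σ j : ℕ) : ℤ) + 1

/-- The maximal chains of a graded bounded poset of rank `n`. -/
abbrev MaxChain (n : ℕ) (P : Type*) [PartialOrder P] [BoundedOrder P] :=
  {c : ℕ → P // IsSatChain n c ⊥ ⊤}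

/-- The label word of `c` has a descent at position `i` (meaningful for `1 ≤ i ≤ n-1`):
the label of the `i`-th edge exceeds the label of the `(i+1)`-st edge. -/
def DescentAt [PartialOrder P] (lab : P → P → ℤ) (c : ℕ → P) (i : ℕ) : Prop :=
  lab (c i) (c (i + 1)) < lab (c (i - 1)) (c i)

/-- The maximal chain `c` has label word (the permutation) `σ`, where the label of the
`j`-th edge is `σ(j)` (written 1-indexed: the value `(σ j) + 1`). -/
def HasWord [PartialOrder P] (lab : P → P → ℤ) {n : ℕ} (c : ℕ → P)
    (σ : Equiv.Perm (Fin n)) : Prop :=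
  ∀ j : Fin n, lab (c j) (c ((j : ℕ) + 1)) = ((σ j : ℕ) : ℤ) + 1

/-- The defining property of the descent-removing operators `U_i` attached to an
`S_n` EL-labeling: `U i m` agrees with `m` away from rank `i` and has no descent at `i`. -/
def IsUSystem [PartialOrder P] [BoundedOrder P] (n : ℕ) (lab : P → P → ℤ)
    (U : ℕ → MaxChain n P → MaxChain n P) : Prop :=
  ∀ i, 1 ≤ i → i < n → ∀ m : MaxChain n P,
    (∀ j, j ≠ i → (U i m).1 j = m.1 j) ∧ ¬ DescentAt lab (U i m).1 i

/-- `m'` lies in the closure of the maximal chain `m` under the operators `U_i`. -/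
def InClosure [PartialOrder P] [BoundedOrder P] (n : ℕ)
    (U : ℕ → MaxChain n P → MaxChain n P) (m m' : MaxChain n P) : Prop :=
  ∃ l : List ℕ, (∀ i ∈ l, 1 ≤ i ∧ i < n) ∧ List.foldr U m l = m'

/-- `α_P(S)`: the number of chains of `P` whose rank set is exactly `S`. -/
noncomputable def alphaP [PartialOrder P] (rk : P → ℕ) (S : Finset ℕ) : ℕ :=
  Nat.card {t : Finset P // IsChain (· ≤ ·) (t : Set P) ∧ t.image rk = S ∧ t.card = S.card}

/-- The flag `h`-vector `β_P(S) = ∑_{T ⊆ S} (-1)^{|S - T|} α_P(T)`. -/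
noncomputable def betaP [PartialOrder P] (rk : P → ℕ) (S : Finset ℕ) : ℤ :=
  ∑ T ∈ S.powerset, (-1 : ℤ) ^ (S.card - T.card) * (alphaP rk T : ℤ)

/-- `P` is bowtie-free: there are no distinct `a, b, c, d` with `a` and `b` each
covering both `c` and `d`. -/
def BowtieFree (P : Type*) [PartialOrder P] : Prop :=
  ∀ a b c d : P, c ⋖ a → d ⋖ a → c ⋖ b → d ⋖ b → a = b ∨ c = d

/-- The operators `U_i`, `1 ≤ i ≤ n-1`, form a local 0-Hecke action on the maximal
chains: they are local at rank `i`, idempotent, commute at distance `≥ 2`, and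
satisfy the braid relations. -/
def IsLocalHeckeAction [PartialOrder P] [BoundedOrder P] (n : ℕ)
    (U : ℕ → MaxChain n P → MaxChain n P) : Prop :=
  (∀ i, 1 ≤ i → i < n → ∀ m : MaxChain n P, ∀ j, j ≠ i → (U i m).1 j = m.1 j) ∧
  (∀ i, 1 ≤ i → i < n → ∀ m, U i (U i m) = U i m) ∧
  (∀ i j, 1 ≤ i → i < n → 1 ≤ j → j < n → i + 2 ≤ j → ∀ m, U i (U j m) = U j (U i m)) ∧
  (∀ i, 1 ≤ i → i + 1 < n → ∀ m,
    U i (U (i + 1) (U i m)) = U (i + 1) (U i (U (i + 1) m)))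

/-- A good `H_n(0)` action: a local 0-Hecke action on the maximal chains such that for
every `S ⊆ [n-1]`, `α_P(S)` equals the number of maximal chains whose descent set
`{i : U_i m ≠ m}` is contained in `S` (equivalently, `ω F_P = ch χ_P`). -/
def IsGoodHeckeAction [PartialOrder P] [BoundedOrder P] (n : ℕ) (rk : P → ℕ)
    (U : ℕ → MaxChain n P → MaxChain n P) : Prop :=
  IsLocalHeckeAction n U ∧
    ∀ S : Finset ℕ, S ⊆ Finset.Icc 1 (n - 1) →
      alphaP rk S =
        Nat.card {m : MaxChain n P // ∀ i, 1 ≤ i → i < n → U i m ≠ m → i ∈ S}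

/-- An expression `U_{i_1} ⋯ U_{i_r} (m) = m'` (the list `l = [i_1, …, i_r]`, applied
right-to-left) is restless: every single application strictly changes the chain. -/
def Restless [PartialOrder P] [BoundedOrder P] {n : ℕ}
    (U : ℕ → MaxChain n P → MaxChain n P) (l : List ℕ) (m m' : MaxChain n P) : Prop :=
  List.foldr U m l = m' ∧
    ∀ i t, (i :: t) <:+ l → U i (List.foldr U m t) ≠ List.foldr U m t

/-- A subset of a lattice closed under join and meet. -/
def SublClosed [Lattice P] (t : Set P) : Prop :=
  ∀ a ∈ t, ∀ b ∈ t, a ⊔ b ∈ t ∧ a ⊓ b ∈ t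

/-- The sublattice generated by the set `s`. -/
def genSub [Lattice P] (s : Set P) : Set P :=
  ⋂₀ {t : Set P | s ⊆ t ∧ SublClosed t}

/-- The subset `t` is distributive (as a sublattice). -/
def DistribOn [Lattice P] (t : Set P) : Prop :=
  ∀ a ∈ t, ∀ b ∈ t, ∀ c ∈ t, a ⊓ (b ⊔ c) = (a ⊓ b) ⊔ (a ⊓ c)

/-- A lattice (graded, of rank `n`) is supersolvable if it has a maximal chain (an
M-chain) which together with any other chain generates a distributive sublattice. -/
def Supersolvable (n : ℕ) (P : Type*) [Lattice P] [BoundedOrder P] : Prop :=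
  ∃ M : MaxChain n P, ∀ c : Set P, IsChain (· ≤ ·) c →
    DistribOn (genSub (Set.range M.1 ∪ c))

end Posets

namespace Aux

variable {n : ℕ}

lemma mem_invSet {v : Equiv.Perm (Fin n)} {p : Fin n × Fin n} :
    p ∈ invSet v ↔ p.1 < p.2 ∧ v.symm p.2 < v.symm p.1 := by
  constructor
  · rintro ⟨i, j, hij, h1, h2, h3⟩
    rw [← h1, ← h2]
    simpa using ⟨h3, hij⟩
  · rintro ⟨h1, h2⟩
    exact ⟨v.symm p.2, v.symm p.1, h2, by simp, by simp, by simpa using h1⟩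

lemma adjSwap_eq {k : ℕ} (hk : k + 1 < n) :
    adjSwap n k = Equiv.swap ⟨k, Nat.lt_of_succ_lt hk⟩ ⟨k + 1, hk⟩ := dif_pos hk

lemma mul_adjSwap_symm_apply {v : Equiv.Perm (Fin n)} {k : ℕ} (hk : k + 1 < n) (x : Fin n) :
    (v * adjSwap n k).symm x =
      Equiv.swap ⟨k, Nat.lt_of_succ_lt hk⟩ ⟨k + 1, hk⟩ (v.symm x) := by
  rw [adjSwap_eq hk]
  rfl

lemma swap_val {k : ℕ} (hk : k + 1 < n) (t : Fin n) :
    ((Equiv.swap ⟨k, Nat.lt_of_succ_lt hk⟩ ⟨k + 1, hk⟩ t : Fin n) : ℕ) =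
      if (t : ℕ) = k then k + 1 else if (t : ℕ) = k + 1 then k else (t : ℕ) := by
  rcases eq_or_ne t ⟨k, Nat.lt_of_succ_lt hk⟩ with rfl | h1
  · simp
  · rcases eq_or_ne t ⟨k + 1, hk⟩ with rfl | h2
    · simp
    · rw [Equiv.swap_apply_of_ne_of_ne h1 h2]
      rw [Fin.ne_iff_vne] at h1 h2
      simp only [Fin.val_mk] at h1 h2 ⊢
      rw [if_neg h1, if_neg h2]

lemma invSet_mul_adjSwap {v : Equiv.Perm (Fin n)} {k : ℕ} (hk : k + 1 < n)
    (h : v ⟨k, Nat.lt_of_succ_lt hk⟩ < v ⟨k + 1, hk⟩) :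
    invSet (v * adjSwap n k) =
      insert (v ⟨k, Nat.lt_of_succ_lt hk⟩, v ⟨k + 1, hk⟩) (invSet v) ∧
      (v ⟨k, Nat.lt_of_succ_lt hk⟩, v ⟨k + 1, hk⟩) ∉ invSet v := by
  constructor
  · ext ⟨x, y⟩
    simp only [mem_invSet, Set.mem_insert_iff, Prod.mk.injEq,
      mul_adjSwap_symm_apply hk]
    have hP : x = v ⟨k, Nat.lt_of_succ_lt hk⟩ ↔ (v.symm x : ℕ) = k := by
      rw [← Equiv.symm_apply_eq, Fin.ext_iff, Fin.val_mk]
    have hQ : y = v ⟨k + 1, hk⟩ ↔ (v.symm y : ℕ) = k + 1 := by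
      rw [← Equiv.symm_apply_eq, Fin.ext_iff, Fin.val_mk]
    have hf : (v.symm x : ℕ) = k → (v.symm y : ℕ) = k + 1 → x < y := by
      intro h1 h2
      rw [hP.mpr h1, hQ.mpr h2]
      exact h
    have hg : (v.symm x : ℕ) = k + 1 → (v.symm y : ℕ) = k → ¬ x < y := by
      intro h1 h2
      have e1 : x = v ⟨k + 1, hk⟩ := by rw [← Equiv.symm_apply_eq, Fin.ext_iff, Fin.val_mk]; exact h1
      have e2 : y = v ⟨k, Nat.lt_of_succ_lt hk⟩ := by
        rw [← Equiv.symm_apply_eq, Fin.ext_iff, Fin.val_mk]; exact h2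
      rw [e1, e2]
      exact not_lt.2 h.le
    rw [hP, hQ]
    have hlt1 : Equiv.swap ⟨k, Nat.lt_of_succ_lt hk⟩ ⟨k + 1, hk⟩ (v.symm y) <
        Equiv.swap ⟨k, Nat.lt_of_succ_lt hk⟩ ⟨k + 1, hk⟩ (v.symm x) ↔
        ((Equiv.swap ⟨k, Nat.lt_of_succ_lt hk⟩ ⟨k + 1, hk⟩ (v.symm y) : Fin n) : ℕ) <
        ((Equiv.swap ⟨k, Nat.lt_of_succ_lt hk⟩ ⟨k + 1, hk⟩ (v.symm x) : Fin n) : ℕ) := Iff.rfl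
    rw [hlt1, swap_val hk, swap_val hk]
    have hlt2 : v.symm y < v.symm x ↔ ((v.symm y : ℕ) < (v.symm x : ℕ)) := Iff.rfl
    rw [hlt2]
    by_cases hX : x < y
    · simp only [hX, true_and]
      have := hg
      by_cases h1 : (v.symm x : ℕ) = k + 1
      · by_cases h2 : (v.symm y : ℕ) = k
        · exact absurd hX (hg h1 h2)
        · split_ifs <;> omega
      · split_ifs <;> omega
    · simp only [hX, false_and, false_or, or_false, false_iff, not_and]
      intro h1 h2
      exact hX (hf h1 h2)
  · rw [mem_invSet]
    rintro ⟨-, h2⟩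
    simp only [Equiv.symm_apply_apply] at h2
    exact absurd h2 (by simp [Fin.lt_def])

lemma invSet_finite (v : Equiv.Perm (Fin n)) : (invSet v).Finite := Set.toFinite _

lemma invCount_mul_adjSwap {v : Equiv.Perm (Fin n)} {k : ℕ} (hk : k + 1 < n)
    (h : v ⟨k, Nat.lt_of_succ_lt hk⟩ < v ⟨k + 1, hk⟩) :
    invCount (v * adjSwap n k) = invCount v + 1 := by
  obtain ⟨he, hn⟩ := invSet_mul_adjSwap hk h
  rw [invCount, invCount, he, Set.ncard_insert_of_notMem hn (invSet_finite v)]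

lemma adjSwap_mul_adjSwap (k : ℕ) : adjSwap n k * adjSwap n k = 1 := by
  unfold adjSwap
  split_ifs
  · exact Equiv.swap_mul_self _ _
  · simp

lemma mul_adjSwap_cancel (v : Equiv.Perm (Fin n)) (k : ℕ) :
    v * adjSwap n k * adjSwap n k = v := by
  rw [mul_assoc, adjSwap_mul_adjSwap, mul_one]

lemma mul_adjSwap_apply_lt {v : Equiv.Perm (Fin n)} {k : ℕ} (hk : k + 1 < n) :
    (v * adjSwap n k) ⟨k, Nat.lt_of_succ_lt hk⟩ = v ⟨k + 1, hk⟩ ∧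
    (v * adjSwap n k) ⟨k + 1, hk⟩ = v ⟨k, Nat.lt_of_succ_lt hk⟩ := by
  rw [adjSwap_eq hk]
  constructor
  · simp [Equiv.Perm.mul_apply]
  · simp [Equiv.Perm.mul_apply]

/-- If the count drops after multiplying by `adjSwap k`, then there's a descent at `k`. -/
lemma descent_of_weakStep {w : Equiv.Perm (Fin n)} {k : ℕ} (hk : k + 1 < n)
    (hc : invCount (w * adjSwap n k) + 1 = invCount w) :
    w ⟨k + 1, hk⟩ < w ⟨k, Nat.lt_of_succ_lt hk⟩ := by
  rcases lt_trichotomy (w ⟨k, Nat.lt_of_succ_lt hk⟩) (w ⟨k + 1, hk⟩) with h | h | h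
  · have := invCount_mul_adjSwap hk h
    omega
  · exact absurd (w.injective h) (by simp [Fin.ext_iff])
  · exact h

/-- With a descent at `k`, multiplying by `adjSwap k` removes the inversion `(w(k+1), w(k))`. -/
lemma invSet_mul_adjSwap_of_descent {w : Equiv.Perm (Fin n)} {k : ℕ} (hk : k + 1 < n)
    (h : w ⟨k + 1, hk⟩ < w ⟨k, Nat.lt_of_succ_lt hk⟩) :
    invSet w = insert (w ⟨k + 1, hk⟩, w ⟨k, Nat.lt_of_succ_lt hk⟩)
        (invSet (w * adjSwap n k)) ∧
      (w ⟨k + 1, hk⟩, w ⟨k, Nat.lt_of_succ_lt hk⟩) ∉ invSet (w * adjSwap n k) ∧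
      invCount w = invCount (w * adjSwap n k) + 1 := by
  set v := w * adjSwap n k with hv
  have h1 : v ⟨k, Nat.lt_of_succ_lt hk⟩ = w ⟨k + 1, hk⟩ := (mul_adjSwap_apply_lt hk).1
  have h2 : v ⟨k + 1, hk⟩ = w ⟨k, Nat.lt_of_succ_lt hk⟩ := (mul_adjSwap_apply_lt hk).2
  have hasc : v ⟨k, Nat.lt_of_succ_lt hk⟩ < v ⟨k + 1, hk⟩ := by rw [h1, h2]; exact h
  have hw : v * adjSwap n k = w := by rw [hv, mul_adjSwap_cancel]
  obtain ⟨he, hn⟩ := invSet_mul_adjSwap hk hasc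
  rw [hw] at he
  rw [h1, h2] at he hn
  refine ⟨he, hn, ?_⟩
  rw [invCount, invCount, he, Set.ncard_insert_of_notMem hn (invSet_finite v)]

lemma leRW_invSet_subset {u w : Equiv.Perm (Fin n)} (h : leRW u w) : invSet u ⊆ invSet w := by
  unfold leRW at h
  induction h with
  | refl => exact subset_rfl
  | tail _ hstep ih =>
    rename_i b c _
    refine subset_trans ?_ ih
    obtain ⟨k, hk, rfl, hc⟩ := hstep
    have hd := descent_of_weakStep hk hc
    obtain ⟨he, -, -⟩ := invSet_mul_adjSwap_of_descent hk hd
    rw [he]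
    exact Set.subset_insert _ _

lemma invCount_le_of_leRW {u w : Equiv.Perm (Fin n)} (h : leRW u w) : invCount u ≤ invCount w :=
  Set.ncard_le_ncard (leRW_invSet_subset h) (invSet_finite w)

lemma invSet_inj {u w : Equiv.Perm (Fin n)} (h : invSet u = invSet w) : u = w := by
  have key : ∀ a b : Fin n, a < b → ((u.symm b < u.symm a) ↔ (w.symm b < w.symm a)) := by
    intro a b hab
    have := Set.ext_iff.1 h (a, b)
    rw [mem_invSet, mem_invSet] at this
    simp only [hab, true_and] at this
    exact this
  have hcomp : ∀ a b : Fin n, a < b → (u.symm a < u.symm b ↔ w.symm a < w.symm b) := by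
    intro a b hab
    have h1 := key a b hab
    have hu : u.symm a ≠ u.symm b := fun e => absurd (u.symm.injective e) hab.ne
    have hw : w.symm a ≠ w.symm b := fun e => absurd (w.symm.injective e) hab.ne
    rw [Fin.lt_def, Fin.lt_def] at h1 ⊢
    rw [Fin.ne_iff_vne] at hu hw
    omega
  have hmono : StrictMono (fun x => w.symm (u x)) := by
    intro x y hxy
    have hab : u x ≠ u y := fun e => absurd (u.injective e) hxy.ne
    rcases lt_or_gt_of_ne hab with hlt | hgt
    · have := (hcomp (u x) (u y) hlt).1 (by simpa using hxy)
      exact this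
    · exact (key (u y) (u x) hgt).1 (by simpa using hxy)
  have hsurj : Function.Surjective (fun x => w.symm (u x)) := fun y => ⟨u.symm (w y), by simp⟩
  let e : Fin n ≃o Fin n := StrictMono.orderIsoOfSurjective _ hmono hsurj
  have he : e = OrderIso.refl (Fin n) := Subsingleton.elim _ _
  have : ∀ x, w.symm (u x) = x := by
    intro x
    have := congrArg (fun f => (f : Fin n ≃o Fin n) x) he
    exact this
  ext x
  have h2 := congrArg w (this x)
  simp only [Equiv.apply_symm_apply] at h2
  exact congrArg Fin.val h2

/-- Transitivity of inversion sets. -/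
lemma invSet_trans {w : Equiv.Perm (Fin n)} {a b c : Fin n}
    (h1 : (a, b) ∈ invSet w) (h2 : (b, c) ∈ invSet w) : (a, c) ∈ invSet w := by
  rw [mem_invSet] at h1 h2 ⊢
  exact ⟨h1.1.trans h2.1, h2.2.trans h1.2⟩

lemma mul_adjSwap_apply {v : Equiv.Perm (Fin n)} {k : ℕ} (hk : k + 1 < n) (x : Fin n) :
    (v * adjSwap n k) x = v (Equiv.swap ⟨k, Nat.lt_of_succ_lt hk⟩ ⟨k + 1, hk⟩ x) := by
  rw [adjSwap_eq hk]; rfl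

lemma mul_adjSwap_other {v : Equiv.Perm (Fin n)} {k : ℕ} (hk : k + 1 < n) {x : Fin n}
    (h1 : (x : ℕ) ≠ k) (h2 : (x : ℕ) ≠ k + 1) : (v * adjSwap n k) x = v x := by
  rw [mul_adjSwap_apply hk,
    Equiv.swap_apply_of_ne_of_ne (fun e => h1 (by rw [e])) (fun e => h2 (by rw [e]))]

lemma adjSwap_commute {k k' : ℕ} (h : k + 2 ≤ k') :
    adjSwap n k' * adjSwap n k = adjSwap n k * adjSwap n k' := by
  unfold adjSwap
  split_ifs with h1 h2 h2
  · refine ((Equiv.Perm.Disjoint.commute ?_).eq).symm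
    intro x
    by_cases hx : (x : ℕ) = k ∨ (x : ℕ) = k + 1
    · right
      apply Equiv.swap_apply_of_ne_of_ne <;>
        · intro e
          have := congrArg Fin.val e
          simp only [Fin.val_mk] at this
          omega
    · left
      push_neg at hx
      apply Equiv.swap_apply_of_ne_of_ne <;>
        · intro e
          have := congrArg Fin.val e
          simp only [Fin.val_mk] at this
          omega
  · simp
  · simp
  · simp

lemma adjSwap_braid {k : ℕ} (hk : k + 2 < n) :
    adjSwap n k * adjSwap n (k + 1) * adjSwap n k =
      adjSwap n (k + 1) * adjSwap n k * adjSwap n (k + 1) := by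
  have hk1 : k + 1 < n := Nat.lt_of_succ_lt hk
  have hk2 : k + 1 + 1 < n := hk
  set K : Fin n := ⟨k, Nat.lt_of_succ_lt hk1⟩ with hK
  set K1 : Fin n := ⟨k + 1, hk1⟩ with hK1
  set K2 : Fin n := ⟨k + 1 + 1, hk2⟩ with hK2
  have e1 : adjSwap n k = Equiv.swap K K1 := adjSwap_eq hk1
  have e2 : adjSwap n (k + 1) = Equiv.swap K1 K2 := adjSwap_eq hk2
  have ne01 : K ≠ K1 := by simp only [hK, hK1, Fin.ne_iff_vne, Fin.val_mk]; omega
  have ne02 : K ≠ K2 := by simp only [hK, hK2, Fin.ne_iff_vne, Fin.val_mk]; omega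
  have ne12 : K1 ≠ K2 := by simp only [hK1, hK2, Fin.ne_iff_vne, Fin.val_mk]; omega
  have l1 : Equiv.swap K K1 K = K1 := Equiv.swap_apply_left _ _
  have l2 : Equiv.swap K1 K2 K1 = K2 := Equiv.swap_apply_left _ _
  have l3 : Equiv.swap K K1 K2 = K2 := Equiv.swap_apply_of_ne_of_ne ne02.symm ne12.symm
  have r1 : Equiv.swap K1 K2 K = K := Equiv.swap_apply_of_ne_of_ne ne01 ne02
  have a1 : Equiv.swap K K1 K1 = K := Equiv.swap_apply_right _ _
  have a2 : Equiv.swap K1 K2 K2 = K1 := Equiv.swap_apply_right _ _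
  rw [e1, e2]
  apply Equiv.ext
  intro x
  simp only [Equiv.Perm.mul_apply]
  rcases eq_or_ne x K with rfl | hx0
  · rw [l1, l2, l3, r1, l1, l2]
  · rcases eq_or_ne x K1 with rfl | hx1
    · rw [a1, l2, r1, l1, l3, a2]
    · rcases eq_or_ne x K2 with rfl | hx2
      · rw [l3, a2, a1, r1]
      · have o1 : Equiv.swap K K1 x = x := Equiv.swap_apply_of_ne_of_ne hx0 hx1
        have o2 : Equiv.swap K1 K2 x = x := Equiv.swap_apply_of_ne_of_ne hx1 hx2
        rw [o1, o2, o1, o2]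

lemma exists_adjacent_descent {u w : Equiv.Perm (Fin n)} (hsub : invSet u ⊆ invSet w)
    (hne : u ≠ w) :
    ∃ k : ℕ, ∃ hk : k + 1 < n, w ⟨k + 1, hk⟩ < w ⟨k, Nat.lt_of_succ_lt hk⟩ ∧
      (w ⟨k + 1, hk⟩, w ⟨k, Nat.lt_of_succ_lt hk⟩) ∉ invSet u := by
  classical
  have hset : invSet u ≠ invSet w := fun e => hne (invSet_inj e)
  have hex : ∃ p, p ∈ invSet w ∧ p ∉ invSet u := by
    by_contra hc
    push_neg at hc
    exact hset (Set.Subset.antisymm hsub (fun p hp => hc p hp))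
  have hDex : ∃ d, ∃ i j : Fin n, (i : ℕ) + d = (j : ℕ) ∧ 0 < d ∧
      w j < w i ∧ (w j, w i) ∉ invSet u := by
    obtain ⟨⟨a, b⟩, hw1, hu1⟩ := hex
    rw [mem_invSet] at hw1
    dsimp only at hw1
    have hlt := hw1.2
    rw [Fin.lt_def] at hlt
    refine ⟨(w.symm a : ℕ) - (w.symm b : ℕ), w.symm b, w.symm a, by omega, by omega, ?_, ?_⟩
    · simpa using hw1.1
    · simpa using hu1
  obtain ⟨d, hspec, hmin'⟩ : ∃ d, (∃ i j : Fin n, (i : ℕ) + d = (j : ℕ) ∧ 0 < d ∧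
      w j < w i ∧ (w j, w i) ∉ invSet u) ∧ ∀ d' < d, ¬ (∃ i j : Fin n,
      (i : ℕ) + d' = (j : ℕ) ∧ 0 < d' ∧ w j < w i ∧ (w j, w i) ∉ invSet u) :=
    ⟨Nat.find hDex, Nat.find_spec hDex, fun d' hd' => Nat.find_min hDex hd'⟩
  obtain ⟨i, j, hij, hdpos, hwlt, hnotu⟩ := hspec
  have hmin : ∀ p q : Fin n, (p : ℕ) < (q : ℕ) → (q : ℕ) - (p : ℕ) < d →
      w q < w p → (w q, w p) ∈ invSet u := by
    intro p q hpq hlt hwpq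
    by_contra hc
    exact hmin' _ hlt ⟨p, q, by omega, by omega, hwpq, hc⟩
  have hval : ∀ x y : Fin n, x < y → (x, y) ∉ invSet u →
      (u.symm x : ℕ) < (u.symm y : ℕ) := by
    intro x y hxy hn
    rw [mem_invSet] at hn
    push_neg at hn
    dsimp only at hn
    have h2 := hn hxy
    have hne2 : u.symm x ≠ u.symm y := fun e => absurd (u.symm.injective e) hxy.ne
    rw [Fin.le_def] at h2
    rw [Fin.ne_iff_vne] at hne2
    omega
  have hval2 : ∀ x y : Fin n, (x, y) ∈ invSet u → (u.symm y : ℕ) < (u.symm x : ℕ) := by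
    intro x y hxy
    rw [mem_invSet] at hxy
    dsimp only at hxy
    exact hxy.2
  have hnotw : ∀ x y : Fin n, x < y → (w.symm x : ℕ) < (w.symm y : ℕ) → (x, y) ∉ invSet u := by
    intro x y hxy h hmem
    have hsubm := hsub hmem
    rw [mem_invSet] at hsubm
    dsimp only at hsubm
    have h3 := hsubm.2
    rw [Fin.lt_def] at h3
    omega
  -- show the minimal distance is 1
  have hjn : (j : ℕ) < n := j.isLt
  by_cases hd1 : d = 1
  · refine ⟨(i : ℕ), by omega, ?_, ?_⟩
    · have e1 : (⟨(i : ℕ) + 1, by omega⟩ : Fin n) = j :=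
        Fin.ext (show (i : ℕ) + 1 = (j : ℕ) by omega)
      have e2 : (⟨(i : ℕ), by omega⟩ : Fin n) = i := Fin.ext rfl
      rw [e1, e2]
      exact hwlt
    · have e1 : (⟨(i : ℕ) + 1, by omega⟩ : Fin n) = j :=
        Fin.ext (show (i : ℕ) + 1 = (j : ℕ) by omega)
      have e2 : (⟨(i : ℕ), by omega⟩ : Fin n) = i := Fin.ext rfl
      rw [e1, e2]
      exact hnotu
  · exfalso
    have hd2 : 2 ≤ d := by omega
    set i1 : Fin n := ⟨(i : ℕ) + 1, by omega⟩ with hi1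
    have hii1 : (i1 : ℕ) = (i : ℕ) + 1 := rfl
    -- values
    have hCA : w i1 ≠ w j := fun e => by
      have := congrArg Fin.val (w.injective e); omega
    have hCB : w i1 ≠ w i := fun e => by
      have := congrArg Fin.val (w.injective e); omega
    have hAB : (u.symm (w j) : ℕ) < (u.symm (w i) : ℕ) := by
      apply hval _ _ hwlt hnotu
    rcases lt_trichotomy (w i1) (w j) with hc | hc | hc
    · -- C < A ( < B )
      have h1 : (w i1, w i) ∈ invSet u := by
        apply hmin i i1 (by omega) (by omega)
        exact hc.trans hwlt
      have h2 : (w i1, w j) ∉ invSet u := by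
        apply hnotw _ _ hc
        simp only [Equiv.symm_apply_apply]
        omega
      have hv1 := hval2 _ _ h1
      have hv2 := hval _ _ hc h2
      omega
    · exact hCA hc
    · rcases lt_trichotomy (w i1) (w i) with hc2 | hc2 | hc2
      · -- A < C < B
        have h1 : (w i1, w i) ∈ invSet u := hmin i i1 (by omega) (by omega) hc2
        have h2 : (w j, w i1) ∈ invSet u := hmin i1 j (by omega) (by omega) hc
        have hv1 := hval2 _ _ h1
        have hv2 := hval2 _ _ h2
        omega
      · exact hCB hc2
      · -- B < C
        have h1 : (w j, w i1) ∈ invSet u := hmin i1 j (by omega) (by omega) (hwlt.trans hc2)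
        have h2 : (w i, w i1) ∉ invSet u := by
          apply hnotw _ _ hc2
          simp only [Equiv.symm_apply_apply]
          omega
        have hv1 := hval2 _ _ h1
        have hv2 := hval _ _ hc2 h2
        omega

lemma leRW_refl (u : Equiv.Perm (Fin n)) : leRW u u := Relation.ReflTransGen.refl

lemma leRW_of_invSet_subset : ∀ (w u : Equiv.Perm (Fin n)), invSet u ⊆ invSet w → leRW u w := by
  intro w
  have H : ∀ N : ℕ, ∀ w' u : Equiv.Perm (Fin n), invCount w' ≤ N →
      invSet u ⊆ invSet w' → leRW u w' := by
    intro N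
    induction N with
    | zero =>
      intro w' u hN hsub
      by_cases he : u = w'
      · subst he; exact leRW_refl u
      · exfalso
        obtain ⟨k, hk, hdesc, hnot⟩ := exists_adjacent_descent hsub he
        obtain ⟨hins, hnm, hcount⟩ := invSet_mul_adjSwap_of_descent hk hdesc
        omega
    | succ N ih =>
      intro w' u hN hsub
      by_cases he : u = w'
      · subst he; exact leRW_refl u
      · obtain ⟨k, hk, hdesc, hnot⟩ := exists_adjacent_descent hsub he
        obtain ⟨hins, hnm, hcount⟩ := invSet_mul_adjSwap_of_descent hk hdesc
        have hsub' : invSet u ⊆ invSet (w' * adjSwap n k) := by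
          intro p hp
          have hmem := hsub hp
          rw [hins] at hmem
          rcases hmem with rfl | hmem
          · exact absurd hp hnot
          · exact hmem
        have hrec : leRW u (w' * adjSwap n k) := ih _ _ (by omega) hsub'
        exact Relation.ReflTransGen.head ⟨k, hk, rfl, by omega⟩ hrec
  intro u hsub
  exact H (invCount w) w u le_rfl hsub

end Aux

namespace AuxP

open Aux

variable {L : Type*} [PartialOrder L] [BoundedOrder L] {n : ℕ} {lab : L → L → ℤ}
  {U : ℕ → MaxChain n L → MaxChain n L}

lemma covby_chain (c : MaxChain n L) {j : ℕ} (hj : j < n) : c.1 j ⋖ c.1 (j + 1) :=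
  c.2.2.2 j hj

lemma lt_two (c : MaxChain n L) {k : ℕ} (hk : k + 1 < n) : c.1 k < c.1 (k + 2) :=
  ((covby_chain c (Nat.lt_of_succ_lt hk)).lt).trans (covby_chain c hk).lt

lemma lt_three (c : MaxChain n L) {k : ℕ} (hk : k + 2 < n) : c.1 k < c.1 (k + 3) :=
  (lt_two c (Nat.lt_of_succ_lt hk)).trans (covby_chain c hk).lt

lemma exists_word (hsn : IsSnELLabeling n lab) (c : MaxChain n L) :
    ∃ σ : Equiv.Perm (Fin n), HasWord lab c.1 σ :=
  hsn.2 c.1 c.2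

lemma word_unique {c : ℕ → L} {σ τ : Equiv.Perm (Fin n)} (h1 : HasWord lab c σ)
    (h2 : HasWord lab c τ) : σ = τ := by
  apply Equiv.ext
  intro j
  have h3 := (h1 j).symm.trans (h2 j)
  have h4 : (σ j : ℕ) = (τ j : ℕ) := by omega
  exact Fin.ext h4

lemma label_eq {c : ℕ → L} {σ : Equiv.Perm (Fin n)} (hw : HasWord lab c σ) {j : ℕ}
    (hj : j < n) : lab (c j) (c (j + 1)) = ((σ ⟨j, hj⟩ : ℕ) : ℤ) + 1 := hw ⟨j, hj⟩

lemma descent_iff {c : ℕ → L} {σ : Equiv.Perm (Fin n)} (hw : HasWord lab c σ) {k : ℕ}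
    (hk : k + 1 < n) :
    DescentAt lab c (k + 1) ↔ σ ⟨k + 1, hk⟩ < σ ⟨k, Nat.lt_of_succ_lt hk⟩ := by
  unfold DescentAt
  have e1 : lab (c (k + 1)) (c (k + 1 + 1)) = ((σ ⟨k + 1, hk⟩ : ℕ) : ℤ) + 1 := label_eq hw hk
  have e2 : lab (c (k + 1 - 1)) (c (k + 1)) =
      ((σ ⟨k, Nat.lt_of_succ_lt hk⟩ : ℕ) : ℤ) + 1 := label_eq hw (Nat.lt_of_succ_lt hk)
  rw [e1, e2, Fin.lt_def]
  omega

lemma el_unique (hel : IsELLabeling lab) {x y : L} (hxy : x < y) {k : ℕ} {c d : ℕ → L}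
    (hc : IsSatChain k c x y) (hci : IncreasingChain lab k c)
    (hd : IsSatChain k d x y) (hdi : IncreasingChain lab k d) : c = d := by
  obtain ⟨⟨e, he, hu⟩, -⟩ := hel x y hxy k ⟨c, hc⟩
  rw [hu c ⟨hc, hci⟩, hu d ⟨hd, hdi⟩]

lemma mid_sat (c : MaxChain n L) {a len : ℕ} (h : a + len ≤ n) :
    IsSatChain len (fun s => c.1 (min (a + s) (a + len))) (c.1 a) (c.1 (a + len)) := by
  refine ⟨?_, fun j hj => ?_, fun j hj => ?_⟩
  · show c.1 (min (a + 0) (a + len)) = c.1 a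
    rw [Nat.add_zero, min_eq_left (by omega)]
  · show c.1 (min (a + j) (a + len)) = c.1 (a + len)
    rw [min_eq_right (by omega)]
  · show c.1 (min (a + j) (a + len)) ⋖ c.1 (min (a + (j + 1)) (a + len))
    rw [min_eq_left (by omega), min_eq_left (by omega)]
    exact c.2.2.2 (a + j) (by omega)

lemma mid_inc2 {c : MaxChain n L} {k : ℕ} (hnd : ¬ DescentAt lab c.1 (k + 1)) :
    IncreasingChain lab 2 (fun s => c.1 (min (k + s) (k + 2))) := by
  intro j hj
  have hj0 : j = 0 := by omega
  subst hj0
  show lab (c.1 (min (k + 0) (k + 2))) (c.1 (min (k + 1) (k + 2))) ≤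
    lab (c.1 (min (k + 1) (k + 2))) (c.1 (min (k + 2) (k + 2)))
  rw [Nat.add_zero, min_eq_left (by omega), min_eq_left (by omega), min_self]
  exact not_lt.1 hnd

lemma mid_inc3 {c : MaxChain n L} {σ : Equiv.Perm (Fin n)} (hw : HasWord lab c.1 σ)
    {k : ℕ} (hk : k + 2 < n)
    (h1 : σ ⟨k, by omega⟩ < σ ⟨k + 1, by omega⟩)
    (h2 : σ ⟨k + 1, by omega⟩ < σ ⟨k + 2, hk⟩) :
    IncreasingChain lab 3 (fun s => c.1 (min (k + s) (k + 3))) := by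
  intro j hj
  have e0 : lab (c.1 k) (c.1 (k + 1)) = ((σ ⟨k, by omega⟩ : ℕ) : ℤ) + 1 :=
    label_eq hw (by omega)
  have e1 : lab (c.1 (k + 1)) (c.1 (k + 2)) = ((σ ⟨k + 1, by omega⟩ : ℕ) : ℤ) + 1 :=
    label_eq hw (by omega)
  have e2 : lab (c.1 (k + 2)) (c.1 (k + 3)) = ((σ ⟨k + 2, hk⟩ : ℕ) : ℤ) + 1 :=
    label_eq hw hk
  have hj01 : j = 0 ∨ j = 1 := by omega
  rcases hj01 with rfl | rfl
  · show lab (c.1 (min (k + 0) (k + 3))) (c.1 (min (k + 1) (k + 3))) ≤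
      lab (c.1 (min (k + 1) (k + 3))) (c.1 (min (k + 2) (k + 3)))
    rw [Nat.add_zero, min_eq_left (by omega), min_eq_left (by omega),
      min_eq_left (by omega), e0, e1]
    rw [Fin.lt_def] at h1
    omega
  · show lab (c.1 (min (k + 1) (k + 3))) (c.1 (min (k + 2) (k + 3))) ≤
      lab (c.1 (min (k + 2) (k + 3))) (c.1 (min (k + 3) (k + 3)))
    rw [min_eq_left (by omega), min_eq_left (by omega), min_self, e1, e2]
    rw [Fin.lt_def] at h2
    omega

lemma U_fix (hsn : IsSnELLabeling n lab) (hU : IsUSystem n lab U) {k : ℕ} (hk : k + 1 < n)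
    {x : MaxChain n L} (hnd : ¬ DescentAt lab x.1 (k + 1)) : U (k + 1) x = x := by
  have hUs := hU (k + 1) (by omega) hk x
  have hlt : x.1 k < x.1 (k + 2) := lt_two x hk
  have hxk : (U (k + 1) x).1 k = x.1 k := hUs.1 k (by omega)
  have hxk2 : (U (k + 1) x).1 (k + 2) = x.1 (k + 2) := hUs.1 (k + 2) (by omega)
  have s1 := mid_sat (U (k + 1) x) (a := k) (len := 2) (by omega)
  rw [hxk, hxk2] at s1
  have s2 := mid_sat x (a := k) (len := 2) (by omega)
  have heq := el_unique hsn.1 hlt s1 (mid_inc2 hUs.2) s2 (mid_inc2 hnd)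
  have h1 := congrFun heq 1
  simp only [min_eq_left (show k + 1 ≤ k + 2 by omega)] at h1
  apply Subtype.ext
  funext j
  by_cases hj : j = k + 1
  · subst hj; exact h1
  · exact hUs.1 j hj

lemma U_mid (hsn : IsSnELLabeling n lab) (hU : IsUSystem n lab U) {k : ℕ} (hk : k + 1 < n)
    {x y : MaxChain n L} (ha : x.1 k = y.1 k) (hb : x.1 (k + 2) = y.1 (k + 2)) :
    (U (k + 1) x).1 (k + 1) = (U (k + 1) y).1 (k + 1) := by
  have hx := hU (k + 1) (by omega) hk x
  have hy := hU (k + 1) (by omega) hk y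
  have hlt : x.1 k < x.1 (k + 2) := lt_two x hk
  have s1 := mid_sat (U (k + 1) x) (a := k) (len := 2) (by omega)
  have s2 := mid_sat (U (k + 1) y) (a := k) (len := 2) (by omega)
  rw [hx.1 k (by omega), hx.1 (k + 2) (by omega)] at s1
  rw [hy.1 k (by omega), hy.1 (k + 2) (by omega), ← ha, ← hb] at s2
  have heq := el_unique hsn.1 hlt s1 (mid_inc2 hx.2) s2 (mid_inc2 hy.2)
  have h1 := congrFun heq 1
  simpa only [min_eq_left (show k + 1 ≤ k + 2 by omega)] using h1

lemma U_comm (hsn : IsSnELLabeling n lab) (hU : IsUSystem n lab U) {k k' : ℕ}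
    (hk : k + 1 < n) (hk' : k' + 1 < n) (h : k + 2 ≤ k') (t : MaxChain n L) :
    U (k + 1) (U (k' + 1) t) = U (k' + 1) (U (k + 1) t) := by
  have h1 := hU (k + 1) (by omega) hk
  have h2 := hU (k' + 1) (by omega) hk'
  apply Subtype.ext
  funext j
  by_cases hj1 : j = k + 1
  · subst hj1
    have e1 : (U (k' + 1) t).1 k = t.1 k := (h2 t).1 k (by omega)
    have e2 : (U (k' + 1) t).1 (k + 2) = t.1 (k + 2) := (h2 t).1 (k + 2) (by omega)
    have hmid := U_mid hsn hU hk (x := U (k' + 1) t) (y := t) e1 e2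
    rw [hmid]
    exact ((h2 (U (k + 1) t)).1 (k + 1) (by omega)).symm
  · by_cases hj2 : j = k' + 1
    · subst hj2
      have e1 : (U (k + 1) t).1 k' = t.1 k' := (h1 t).1 k' (by omega)
      have e2 : (U (k + 1) t).1 (k' + 2) = t.1 (k' + 2) := (h1 t).1 (k' + 2) (by omega)
      have hmid := U_mid hsn hU hk' (x := U (k + 1) t) (y := t) e1 e2
      rw [(h1 (U (k' + 1) t)).1 (k' + 1) (by omega), ← hmid]
    · rw [(h1 (U (k' + 1) t)).1 j hj1, (h2 t).1 j hj2,
        (h2 (U (k + 1) t)).1 j hj2, (h1 t).1 j hj1]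

lemma word_U_of_descent (hsn : IsSnELLabeling n lab) (hU : IsUSystem n lab U)
    {x : MaxChain n L} {σ : Equiv.Perm (Fin n)} (hw : HasWord lab x.1 σ)
    {k : ℕ} (hk : k + 1 < n) (hd : DescentAt lab x.1 (k + 1)) :
    HasWord lab (U (k + 1) x).1 (σ * adjSwap n k) := by
  obtain ⟨σ', hw'⟩ := exists_word hsn (U (k + 1) x)
  have hUs := hU (k + 1) (by omega) hk x
  have hagree : ∀ j : Fin n, (j : ℕ) ≠ k → (j : ℕ) ≠ k + 1 → σ' j = σ j := by
    intro j hj1 hj2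
    have e1 : (U (k + 1) x).1 (j : ℕ) = x.1 (j : ℕ) := hUs.1 _ (by omega)
    have e2 : (U (k + 1) x).1 ((j : ℕ) + 1) = x.1 ((j : ℕ) + 1) := hUs.1 _ (by omega)
    have h1 := hw' j
    rw [e1, e2] at h1
    have h2 := hw j
    exact Fin.ext (by omega)
  have hKK1 : (⟨k, Nat.lt_of_succ_lt hk⟩ : Fin n) ≠ ⟨k + 1, hk⟩ := by
    simp only [Fin.ne_iff_vne, Fin.val_mk]; omega
  have hmem : ∀ jf : Fin n, ((jf : ℕ) = k ∨ (jf : ℕ) = k + 1) →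
      σ' jf = σ ⟨k, Nat.lt_of_succ_lt hk⟩ ∨ σ' jf = σ ⟨k + 1, hk⟩ := by
    intro jf hjf
    have happ : σ (σ.symm (σ' jf)) = σ' jf := σ.apply_symm_apply _
    by_cases h1 : ((σ.symm (σ' jf) : Fin n) : ℕ) = k
    · left
      rw [← happ]
      congr 1
      exact Fin.ext h1
    · by_cases h2 : ((σ.symm (σ' jf) : Fin n) : ℕ) = k + 1
      · right
        rw [← happ]
        congr 1
        exact Fin.ext h2
      · exfalso
        have h3 : σ' (σ.symm (σ' jf)) = σ' jf := by rw [hagree _ h1 h2, happ]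
        have h4 := congrArg Fin.val (σ'.injective h3)
        rcases hjf with h | h <;> omega
  have hnd := hUs.2
  rw [descent_iff hw' hk] at hnd
  have hlt' : σ' ⟨k, Nat.lt_of_succ_lt hk⟩ < σ' ⟨k + 1, hk⟩ := by
    have hne : σ' ⟨k, Nat.lt_of_succ_lt hk⟩ ≠ σ' ⟨k + 1, hk⟩ :=
      fun e => hKK1 (σ'.injective e)
    exact lt_of_le_of_ne (not_lt.1 hnd) hne
  have hltσ : σ ⟨k + 1, hk⟩ < σ ⟨k, Nat.lt_of_succ_lt hk⟩ := (descent_iff hw hk).1 hd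
  have e1 : σ' ⟨k, Nat.lt_of_succ_lt hk⟩ = σ ⟨k + 1, hk⟩ := by
    rcases hmem ⟨k, Nat.lt_of_succ_lt hk⟩ (Or.inl rfl) with h | h
    · exfalso
      rcases hmem ⟨k + 1, hk⟩ (Or.inr rfl) with h2 | h2
      · exact hKK1 (σ'.injective (h.trans h2.symm))
      · rw [h, h2] at hlt'
        exact absurd hlt' (not_lt.2 hltσ.le)
    · exact h
  have e2 : σ' ⟨k + 1, hk⟩ = σ ⟨k, Nat.lt_of_succ_lt hk⟩ := by
    rcases hmem ⟨k + 1, hk⟩ (Or.inr rfl) with h | h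
    · exact h
    · exact absurd (σ'.injective (e1.trans h.symm)) hKK1
  have hfin : σ' = σ * adjSwap n k := by
    apply Equiv.ext
    intro j
    rw [Aux.mul_adjSwap_apply hk]
    by_cases h1 : j = ⟨k, Nat.lt_of_succ_lt hk⟩
    · subst h1
      rw [Equiv.swap_apply_left]
      exact e1
    · by_cases h2 : j = ⟨k + 1, hk⟩
      · subst h2
        rw [Equiv.swap_apply_right]
        exact e2
      · rw [Equiv.swap_apply_of_ne_of_ne h1 h2]
        exact hagree j (fun e => h1 (Fin.ext e)) (fun e => h2 (Fin.ext e))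
  rwa [hfin] at hw'

lemma U_braid (hsn : IsSnELLabeling n lab) (hU : IsUSystem n lab U) {k : ℕ}
    (hk : k + 2 < n) {t : MaxChain n L} {τ : Equiv.Perm (Fin n)} (hw : HasWord lab t.1 τ)
    (hd1 : τ ⟨k + 1, by omega⟩ < τ ⟨k, by omega⟩)
    (hd2 : τ ⟨k + 2, hk⟩ < τ ⟨k + 1, by omega⟩) :
    U (k + 1) (U (k + 1 + 1) (U (k + 1) t)) = U (k + 1 + 1) (U (k + 1) (U (k + 1 + 1) t)) := by
  have hk1 : k + 1 < n := by omega
  have hk2 : k + 1 + 1 < n := hk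
  -- left path words
  have hw1 : HasWord lab (U (k + 1) t).1 (τ * adjSwap n k) :=
    word_U_of_descent hsn hU hw hk1 ((descent_iff hw hk1).2 hd1)
  have lv1 : (τ * adjSwap n k) ⟨k + 1 + 1, hk2⟩ = τ ⟨k + 1 + 1, hk2⟩ :=
    Aux.mul_adjSwap_other hk1 (show k + 1 + 1 ≠ k by omega) (show k + 1 + 1 ≠ k + 1 by omega)
  have lv2 : (τ * adjSwap n k) ⟨k + 1, hk1⟩ = τ ⟨k, Nat.lt_of_succ_lt hk1⟩ :=
    (Aux.mul_adjSwap_apply_lt hk1).2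
  have lv3 : (τ * adjSwap n k) ⟨k, Nat.lt_of_succ_lt hk1⟩ = τ ⟨k + 1, hk1⟩ :=
    (Aux.mul_adjSwap_apply_lt hk1).1
  have hD2 : DescentAt lab (U (k + 1) t).1 (k + 1 + 1) := by
    rw [descent_iff hw1 hk2]
    rw [lv1, lv2]
    exact hd2.trans hd1
  have hw2 : HasWord lab (U (k + 1 + 1) (U (k + 1) t)).1
      (τ * adjSwap n k * adjSwap n (k + 1)) :=
    word_U_of_descent hsn hU hw1 hk2 hD2
  have mv1 : (τ * adjSwap n k * adjSwap n (k + 1)) ⟨k + 1, hk1⟩ = τ ⟨k + 1 + 1, hk2⟩ :=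
    ((Aux.mul_adjSwap_apply_lt hk2).1).trans lv1
  have mv2 : (τ * adjSwap n k * adjSwap n (k + 1)) ⟨k, Nat.lt_of_succ_lt hk1⟩ =
      τ ⟨k + 1, hk1⟩ :=
    (Aux.mul_adjSwap_other hk2 (show k ≠ k + 1 by omega) (show k ≠ k + 1 + 1 by omega)).trans lv3
  have mv3 : (τ * adjSwap n k * adjSwap n (k + 1)) ⟨k + 1 + 1, hk2⟩ =
      τ ⟨k, Nat.lt_of_succ_lt hk1⟩ :=
    ((Aux.mul_adjSwap_apply_lt hk2).2).trans lv2
  have hD3 : DescentAt lab (U (k + 1 + 1) (U (k + 1) t)).1 (k + 1) := by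
    rw [descent_iff hw2 hk1]
    rw [mv1, mv2]
    exact hd2
  have hw3 : HasWord lab (U (k + 1) (U (k + 1 + 1) (U (k + 1) t))).1
      (τ * adjSwap n k * adjSwap n (k + 1) * adjSwap n k) :=
    word_U_of_descent hsn hU hw2 hk1 hD3
  have wv1 : (τ * adjSwap n k * adjSwap n (k + 1) * adjSwap n k) ⟨k, Nat.lt_of_succ_lt hk1⟩ =
      τ ⟨k + 1 + 1, hk2⟩ :=
    ((Aux.mul_adjSwap_apply_lt hk1).1).trans mv1
  have wv2 : (τ * adjSwap n k * adjSwap n (k + 1) * adjSwap n k) ⟨k + 1, hk1⟩ =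
      τ ⟨k + 1, hk1⟩ :=
    ((Aux.mul_adjSwap_apply_lt hk1).2).trans mv2
  have wv3 : (τ * adjSwap n k * adjSwap n (k + 1) * adjSwap n k) ⟨k + 1 + 1, hk2⟩ =
      τ ⟨k, Nat.lt_of_succ_lt hk1⟩ :=
    (Aux.mul_adjSwap_other hk1 (show k + 1 + 1 ≠ k by omega)
      (show k + 1 + 1 ≠ k + 1 by omega)).trans mv3
  -- right path words
  have hv1 : HasWord lab (U (k + 1 + 1) t).1 (τ * adjSwap n (k + 1)) :=
    word_U_of_descent hsn hU hw hk2 ((descent_iff hw hk2).2 hd2)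
  have rv1 : (τ * adjSwap n (k + 1)) ⟨k + 1, hk1⟩ = τ ⟨k + 1 + 1, hk2⟩ :=
    (Aux.mul_adjSwap_apply_lt hk2).1
  have rv2 : (τ * adjSwap n (k + 1)) ⟨k, Nat.lt_of_succ_lt hk1⟩ =
      τ ⟨k, Nat.lt_of_succ_lt hk1⟩ :=
    Aux.mul_adjSwap_other hk2 (show k ≠ k + 1 by omega) (show k ≠ k + 1 + 1 by omega)
  have rv3 : (τ * adjSwap n (k + 1)) ⟨k + 1 + 1, hk2⟩ = τ ⟨k + 1, hk1⟩ :=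
    (Aux.mul_adjSwap_apply_lt hk2).2
  have hE2 : DescentAt lab (U (k + 1 + 1) t).1 (k + 1) := by
    rw [descent_iff hv1 hk1]
    rw [rv1, rv2]
    exact hd2.trans hd1
  have hv2 : HasWord lab (U (k + 1) (U (k + 1 + 1) t)).1
      (τ * adjSwap n (k + 1) * adjSwap n k) :=
    word_U_of_descent hsn hU hv1 hk1 hE2
  have sv1 : (τ * adjSwap n (k + 1) * adjSwap n k) ⟨k, Nat.lt_of_succ_lt hk1⟩ =
      τ ⟨k + 1 + 1, hk2⟩ :=
    ((Aux.mul_adjSwap_apply_lt hk1).1).trans rv1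
  have sv2 : (τ * adjSwap n (k + 1) * adjSwap n k) ⟨k + 1, hk1⟩ =
      τ ⟨k, Nat.lt_of_succ_lt hk1⟩ :=
    ((Aux.mul_adjSwap_apply_lt hk1).2).trans rv2
  have sv3 : (τ * adjSwap n (k + 1) * adjSwap n k) ⟨k + 1 + 1, hk2⟩ = τ ⟨k + 1, hk1⟩ :=
    (Aux.mul_adjSwap_other hk1 (show k + 1 + 1 ≠ k by omega)
      (show k + 1 + 1 ≠ k + 1 by omega)).trans rv3
  have hE3 : DescentAt lab (U (k + 1) (U (k + 1 + 1) t)).1 (k + 1 + 1) := by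
    rw [descent_iff hv2 hk2]
    rw [sv2, sv3]
    exact hd1
  have hv3 : HasWord lab (U (k + 1 + 1) (U (k + 1) (U (k + 1 + 1) t))).1
      (τ * adjSwap n (k + 1) * adjSwap n k * adjSwap n (k + 1)) :=
    word_U_of_descent hsn hU hv2 hk2 hE3
  have uv1 : (τ * adjSwap n (k + 1) * adjSwap n k * adjSwap n (k + 1))
      ⟨k, Nat.lt_of_succ_lt hk1⟩ = τ ⟨k + 1 + 1, hk2⟩ :=
    (Aux.mul_adjSwap_other hk2 (show k ≠ k + 1 by omega)
      (show k ≠ k + 1 + 1 by omega)).trans sv1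
  have uv2 : (τ * adjSwap n (k + 1) * adjSwap n k * adjSwap n (k + 1)) ⟨k + 1, hk1⟩ =
      τ ⟨k + 1, hk1⟩ :=
    ((Aux.mul_adjSwap_apply_lt hk2).1).trans sv3
  have uv3 : (τ * adjSwap n (k + 1) * adjSwap n k * adjSwap n (k + 1)) ⟨k + 1 + 1, hk2⟩ =
      τ ⟨k, Nat.lt_of_succ_lt hk1⟩ :=
    ((Aux.mul_adjSwap_apply_lt hk2).2).trans sv2
  -- the two chains agree with t away from ranks k+1, k+2
  have hLoff : ∀ j : ℕ, j ≠ k + 1 → j ≠ k + 1 + 1 →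
      (U (k + 1) (U (k + 1 + 1) (U (k + 1) t))).1 j = t.1 j := by
    intro j h1 h2
    rw [(hU (k + 1) (by omega) hk1 _).1 j h1, (hU (k + 1 + 1) (by omega) hk2 _).1 j h2,
      (hU (k + 1) (by omega) hk1 t).1 j h1]
  have hRoff : ∀ j : ℕ, j ≠ k + 1 → j ≠ k + 1 + 1 →
      (U (k + 1 + 1) (U (k + 1) (U (k + 1 + 1) t))).1 j = t.1 j := by
    intro j h1 h2
    rw [(hU (k + 1 + 1) (by omega) hk2 _).1 j h2, (hU (k + 1) (by omega) hk1 _).1 j h1,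
      (hU (k + 1 + 1) (by omega) hk2 t).1 j h2]
  -- saturated increasing chains of length 3
  have hlt3 : t.1 k < t.1 (k + 3) := lt_three t hk
  have s1 := mid_sat (U (k + 1) (U (k + 1 + 1) (U (k + 1) t))) (a := k) (len := 3) (by omega)
  have s2 := mid_sat (U (k + 1 + 1) (U (k + 1) (U (k + 1 + 1) t))) (a := k) (len := 3)
    (by omega)
  rw [hLoff k (by omega) (by omega), hLoff (k + 3) (by omega) (by omega)] at s1
  rw [hRoff k (by omega) (by omega), hRoff (k + 3) (by omega) (by omega)] at s2
  have inc1 : IncreasingChain lab 3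
      (fun s => (U (k + 1) (U (k + 1 + 1) (U (k + 1) t))).1 (min (k + s) (k + 3))) := by
    apply mid_inc3 hw3 hk
    · rw [wv1, wv2]; exact hd2
    · rw [wv2, wv3]; exact hd1
  have inc2 : IncreasingChain lab 3
      (fun s => (U (k + 1 + 1) (U (k + 1) (U (k + 1 + 1) t))).1 (min (k + s) (k + 3))) := by
    apply mid_inc3 hv3 hk
    · rw [uv1, uv2]; exact hd2
    · rw [uv2, uv3]; exact hd1
  have heq := el_unique hsn.1 hlt3 s1 inc1 s2 inc2
  apply Subtype.ext
  funext j
  by_cases hj1 : j = k + 1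
  · subst hj1
    have h1 := congrFun heq 1
    simpa only [min_eq_left (show k + 1 ≤ k + 3 by omega)] using h1
  · by_cases hj2 : j = k + 1 + 1
    · subst hj2
      have h1 := congrFun heq 2
      simpa only [min_eq_left (show k + 2 ≤ k + 3 by omega)] using h1
    · rw [hLoff j hj1 hj2, hRoff j hj1 hj2]

lemma closure_step {m p : MaxChain n L} (hp : InClosure n U m p) {k : ℕ} (hk : k + 1 < n) :
    InClosure n U m (U (k + 1) p) := by
  obtain ⟨l, hl, rfl⟩ := hp
  refine ⟨(k + 1) :: l, ?_, rfl⟩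
  intro i hi
  rcases List.mem_cons.1 hi with rfl | hi
  · omega
  · exact hl i hi

lemma closure_exists_word (hsn : IsSnELLabeling n lab) (hU : IsUSystem n lab U)
    (m : MaxChain n L) {ω : Equiv.Perm (Fin n)} (hm : HasWord lab m.1 ω) :
    ∀ l : List ℕ, (∀ i ∈ l, 1 ≤ i ∧ i < n) →
      ∃ σ, HasWord lab (List.foldr U m l).1 σ ∧ leRW σ ω
  | [], _ => ⟨ω, hm, Relation.ReflTransGen.refl⟩
  | i :: l, hl => by
    obtain ⟨σ, hσ, hle⟩ := closure_exists_word hsn hU m hm l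
      (fun j hj => hl j (List.mem_cons_of_mem _ hj))
    have hi := hl i List.mem_cons_self
    obtain ⟨k, rfl⟩ : ∃ k, i = k + 1 := ⟨i - 1, by omega⟩
    have hk : k + 1 < n := hi.2
    by_cases hd : DescentAt lab (List.foldr U m l).1 (k + 1)
    · refine ⟨σ * adjSwap n k, ?_, ?_⟩
      · rw [List.foldr_cons]
        exact word_U_of_descent hsn hU hσ hk hd
      · have hdesc := (descent_iff hσ hk).1 hd
        obtain ⟨-, -, hcount⟩ := Aux.invSet_mul_adjSwap_of_descent hk hdesc
        exact Relation.ReflTransGen.tail hle ⟨k, hk, rfl, by omega⟩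
    · rw [List.foldr_cons, U_fix hsn hU hk hd]
      exact ⟨σ, hσ, hle⟩

lemma closure_word_le (hsn : IsSnELLabeling n lab) (hU : IsUSystem n lab U)
    (m : MaxChain n L) {ω : Equiv.Perm (Fin n)} (hm : HasWord lab m.1 ω)
    {p : MaxChain n L} (hp : InClosure n U m p) {τ : Equiv.Perm (Fin n)}
    (hτ : HasWord lab p.1 τ) : leRW τ ω := by
  obtain ⟨l, hl, rfl⟩ := hp
  obtain ⟨σ, hσ, hle⟩ := closure_exists_word hsn hU m hm l hl
  rwa [word_unique hτ hσ]

lemma exists_chain_of_leRW (hsn : IsSnELLabeling n lab) (hU : IsUSystem n lab U)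
    (m : MaxChain n L) {ω : Equiv.Perm (Fin n)} (hm : HasWord lab m.1 ω)
    {σ : Equiv.Perm (Fin n)} (h : leRW σ ω) :
    ∃ t : MaxChain n L, InClosure n U m t ∧ HasWord lab t.1 σ := by
  unfold leRW at h
  induction h with
  | refl => exact ⟨m, ⟨[], by simp, rfl⟩, hm⟩
  | tail hb hstep ih =>
    obtain ⟨t, hcl, hwt⟩ := ih
    obtain ⟨k, hk, rfl, hcount⟩ := hstep
    have hdesc := Aux.descent_of_weakStep hk hcount
    have hD : DescentAt lab t.1 (k + 1) := (descent_iff hwt hk).2 hdesc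
    exact ⟨U (k + 1) t, closure_step hcl hk, word_U_of_descent hsn hU hwt hk hD⟩

lemma closure_decomp (hsn : IsSnELLabeling n lab) (hU : IsUSystem n lab U)
    (m : MaxChain n L) :
    ∀ l : List ℕ, (∀ i ∈ l, 1 ≤ i ∧ i < n) →
      List.foldr U m l = m ∨
        ∃ k p, k + 1 < n ∧ InClosure n U m p ∧ DescentAt lab p.1 (k + 1) ∧
          List.foldr U m l = U (k + 1) p
  | [], _ => Or.inl rfl
  | i :: l, hl => by
    have hi := hl i List.mem_cons_self
    obtain ⟨k, rfl⟩ : ∃ k, i = k + 1 := ⟨i - 1, by omega⟩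
    by_cases hd : DescentAt lab (List.foldr U m l).1 (k + 1)
    · exact Or.inr ⟨k, List.foldr U m l, hi.2,
        ⟨l, fun j hj => hl j (List.mem_cons_of_mem _ hj), rfl⟩, hd, rfl⟩
    · rw [List.foldr_cons, U_fix hsn hU hi.2 hd]
      exact closure_decomp hsn hU m l (fun j hj => hl j (List.mem_cons_of_mem _ hj))

lemma eq_base (hsn : IsSnELLabeling n lab) (hU : IsUSystem n lab U) (m : MaxChain n L)
    {ω : Equiv.Perm (Fin n)} (hm : HasWord lab m.1 ω) {σ : Equiv.Perm (Fin n)}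
    {m1 : MaxChain n L} (h1 : InClosure n U m m1) (hw1 : HasWord lab m1.1 σ)
    (hbig : invCount ω ≤ invCount σ) : m1 = m := by
  obtain ⟨l, hl, rfl⟩ := h1
  rcases closure_decomp hsn hU m l hl with h | ⟨k, p, hk, hp, hdp, heq⟩
  · exact h
  · exfalso
    obtain ⟨τ, hwτ⟩ := exists_word hsn p
    have hwm1 : HasWord lab (List.foldr U m l).1 (τ * adjSwap n k) := by
      rw [heq]
      exact word_U_of_descent hsn hU hwτ hk hdp
    have hστ : σ = τ * adjSwap n k := word_unique hw1 hwm1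
    have hdesc := (descent_iff hwτ hk).1 hdp
    obtain ⟨-, -, hcount⟩ := Aux.invSet_mul_adjSwap_of_descent hk hdesc
    have hleτ := closure_word_le hsn hU m hm hp hwτ
    have hcle := Aux.invCount_le_of_leRW hleτ
    have : invCount σ = invCount (τ * adjSwap n k) := by rw [hστ]
    omega

end AuxP

/-- The label permutations of the chains in the `U`-closure `M_m` of a
maximal chain `m` with label permutation `ω_m` are exactly the permutations
`σ ≤_R ω_m` in right weak order, each occurring exactly once. -/
theorem closure_words_are_weak_order_ideal {L : Type*} [Lattice L] [BoundedOrder L]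
    [Fintype L] {n : ℕ} (rk : L → ℕ) (hg : IsGraded n rk)
    (lab : L → L → ℤ) (hsn : IsSnELLabeling n lab)
    (U : ℕ → MaxChain n L → MaxChain n L) (hU : IsUSystem n lab U)
    (m : MaxChain n L) (ωm : Equiv.Perm (Fin n)) (hm : HasWord lab m.1 ωm) :
    (∀ σ : Equiv.Perm (Fin n),
      (∃ m' : MaxChain n L, InClosure n U m m' ∧ HasWord lab m'.1 σ) ↔ leRW σ ωm) ∧
    (∀ (σ : Equiv.Perm (Fin n)) (m' m'' : MaxChain n L),
      InClosure n U m m' → InClosure n U m m'' →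
      HasWord lab m'.1 σ → HasWord lab m''.1 σ → m' = m'') := by
  classical
  have hforward : ∀ σ : Equiv.Perm (Fin n),
      (∃ m' : MaxChain n L, InClosure n U m m' ∧ HasWord lab m'.1 σ) ↔ leRW σ ωm := by
    intro σ
    constructor
    · rintro ⟨m', hcl, hw⟩
      exact AuxP.closure_word_le hsn hU m hm hcl hw
    · intro h
      obtain ⟨t, hcl, hw⟩ := AuxP.exists_chain_of_leRW hsn hU m hm h
      exact ⟨t, hcl, hw⟩
  refine ⟨hforward, ?_⟩
  have main : ∀ d : ℕ, ∀ σ : Equiv.Perm (Fin n), ∀ m1 m2 : MaxChain n L,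
      InClosure n U m m1 → InClosure n U m m2 →
      HasWord lab m1.1 σ → HasWord lab m2.1 σ →
      invCount ωm - invCount σ ≤ d → m1 = m2 := by
    intro d
    induction d with
    | zero =>
      intro σ m1 m2 h1 h2 hw1 hw2 hd
      rw [AuxP.eq_base hsn hU m hm h1 hw1 (by omega),
        AuxP.eq_base hsn hU m hm h2 hw2 (by omega)]
    | succ d ih =>
      intro σ m1 m2 h1 h2 hw1 hw2 hd
      by_cases hbig : invCount ωm ≤ invCount σ
      · rw [AuxP.eq_base hsn hU m hm h1 hw1 hbig, AuxP.eq_base hsn hU m hm h2 hw2 hbig]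
      have hlt : invCount σ < invCount ωm := by omega
      -- decompose both chains
      obtain ⟨l1, hl1, rfl⟩ := h1
      rcases AuxP.closure_decomp hsn hU m l1 hl1 with he | ⟨k1, p, hk1, hp, hdp, heq1⟩
      · exfalso
        rw [he] at hw1
        have := AuxP.word_unique hw1 hm
        rw [this] at hlt
        omega
      obtain ⟨l2, hl2, rfl⟩ := h2
      rcases AuxP.closure_decomp hsn hU m l2 hl2 with he | ⟨k2, q, hk2, hq, hdq, heq2⟩
      · exfalso
        rw [he] at hw2
        have := AuxP.word_unique hw2 hm
        rw [this] at hlt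
        omega
      -- words of p and q
      obtain ⟨τ1, hwp⟩ := AuxP.exists_word hsn p
      obtain ⟨τ2, hwq⟩ := AuxP.exists_word hsn q
      have hsp : τ1 = σ * adjSwap n k1 := by
        have h' : HasWord lab (List.foldr U m l1).1 (τ1 * adjSwap n k1) := by
          rw [heq1]
          exact AuxP.word_U_of_descent hsn hU hwp hk1 hdp
        have hh := AuxP.word_unique hw1 h'
        rw [hh]
        exact (Aux.mul_adjSwap_cancel τ1 k1).symm
      have hsq : τ2 = σ * adjSwap n k2 := by
        have h' : HasWord lab (List.foldr U m l2).1 (τ2 * adjSwap n k2) := by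
          rw [heq2]
          exact AuxP.word_U_of_descent hsn hU hwq hk2 hdq
        have hh := AuxP.word_unique hw2 h'
        rw [hh]
        exact (Aux.mul_adjSwap_cancel τ2 k2).symm
      rw [hsp] at hwp
      rw [hsq] at hwq
      have hasc1 : σ ⟨k1, Nat.lt_of_succ_lt hk1⟩ < σ ⟨k1 + 1, hk1⟩ := by
        have hthis := (AuxP.descent_iff hwp hk1).1 hdp
        rwa [(Aux.mul_adjSwap_apply_lt hk1).1, (Aux.mul_adjSwap_apply_lt hk1).2] at hthis
      have hasc2 : σ ⟨k2, Nat.lt_of_succ_lt hk2⟩ < σ ⟨k2 + 1, hk2⟩ := by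
        have hthis := (AuxP.descent_iff hwq hk2).1 hdq
        rwa [(Aux.mul_adjSwap_apply_lt hk2).1, (Aux.mul_adjSwap_apply_lt hk2).2] at hthis
      have hcnt1 : invCount (σ * adjSwap n k1) = invCount σ + 1 :=
        Aux.invCount_mul_adjSwap hk1 hasc1
      have hcnt2 : invCount (σ * adjSwap n k2) = invCount σ + 1 :=
        Aux.invCount_mul_adjSwap hk2 hasc2
      have hsub1 : invSet (σ * adjSwap n k1) ⊆ invSet ωm :=
        Aux.leRW_invSet_subset (AuxP.closure_word_le hsn hU m hm hp hwp)
      have hsub2 : invSet (σ * adjSwap n k2) ⊆ invSet ωm :=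
        Aux.leRW_invSet_subset (AuxP.closure_word_le hsn hU m hm hq hwq)
      -- the symmetric key step
      have key : ∀ (k1 k2 : ℕ) (hk1 : k1 + 1 < n) (hk2 : k2 + 1 < n)
          (p q : MaxChain n L), k1 < k2 →
          InClosure n U m p → InClosure n U m q →
          HasWord lab p.1 (σ * adjSwap n k1) → HasWord lab q.1 (σ * adjSwap n k2) →
          σ ⟨k1, Nat.lt_of_succ_lt hk1⟩ < σ ⟨k1 + 1, hk1⟩ →
          σ ⟨k2, Nat.lt_of_succ_lt hk2⟩ < σ ⟨k2 + 1, hk2⟩ →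
          invSet (σ * adjSwap n k1) ⊆ invSet ωm →
          invSet (σ * adjSwap n k2) ⊆ invSet ωm →
          U (k1 + 1) p = U (k2 + 1) q := by
        clear hsp hsq hwp hwq hasc1 hasc2 hcnt1 hcnt2 hsub1 hsub2 hdp hdq hp hq heq1 heq2
        intro k1 k2 hk1 hk2 p q hk12 hp hq hwp hwq hasc1 hasc2 hsub1 hsub2
        have hcnt1 : invCount (σ * adjSwap n k1) = invCount σ + 1 :=
          Aux.invCount_mul_adjSwap hk1 hasc1
        have hcnt2 : invCount (σ * adjSwap n k2) = invCount σ + 1 :=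
          Aux.invCount_mul_adjSwap hk2 hasc2
        have hins1 := Aux.invSet_mul_adjSwap hk1 hasc1
        have hins2 := Aux.invSet_mul_adjSwap hk2 hasc2
        by_cases hcase : k1 + 2 ≤ k2
        · -- commuting case
          have hascmid : (σ * adjSwap n k1) ⟨k2, Nat.lt_of_succ_lt hk2⟩ <
              (σ * adjSwap n k1) ⟨k2 + 1, hk2⟩ := by
            rw [Aux.mul_adjSwap_other hk1 (show k2 ≠ k1 by omega) (show k2 ≠ k1 + 1 by omega),
              Aux.mul_adjSwap_other hk1 (show k2 + 1 ≠ k1 by omega)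
                (show k2 + 1 ≠ k1 + 1 by omega)]
            exact hasc2
          have hinsτ := Aux.invSet_mul_adjSwap hk2 hascmid
          have hvk2 : (σ * adjSwap n k1) ⟨k2, Nat.lt_of_succ_lt hk2⟩ =
              σ ⟨k2, Nat.lt_of_succ_lt hk2⟩ :=
            Aux.mul_adjSwap_other hk1 (show k2 ≠ k1 by omega) (show k2 ≠ k1 + 1 by omega)
          have hvk21 : (σ * adjSwap n k1) ⟨k2 + 1, hk2⟩ = σ ⟨k2 + 1, hk2⟩ :=
            Aux.mul_adjSwap_other hk1 (show k2 + 1 ≠ k1 by omega)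
              (show k2 + 1 ≠ k1 + 1 by omega)
          have hsubτ : invSet (σ * adjSwap n k1 * adjSwap n k2) ⊆ invSet ωm := by
            rw [hinsτ.1, hvk2, hvk21]
            intro x hx
            rcases Set.mem_insert_iff.1 hx with rfl | hx
            · exact hsub2 (by rw [hins2.1]; exact Set.mem_insert _ _)
            · exact hsub1 hx
          obtain ⟨t, hct, hwt⟩ := AuxP.exists_chain_of_leRW hsn hU m hm
            (Aux.leRW_of_invSet_subset ωm _ hsubτ)
          have tv1 : (σ * adjSwap n k1 * adjSwap n k2) ⟨k1, Nat.lt_of_succ_lt hk1⟩ =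
              σ ⟨k1 + 1, hk1⟩ :=
            (Aux.mul_adjSwap_other hk2 (show k1 ≠ k2 by omega)
              (show k1 ≠ k2 + 1 by omega)).trans (Aux.mul_adjSwap_apply_lt hk1).1
          have tv2 : (σ * adjSwap n k1 * adjSwap n k2) ⟨k1 + 1, hk1⟩ =
              σ ⟨k1, Nat.lt_of_succ_lt hk1⟩ :=
            (Aux.mul_adjSwap_other hk2 (show k1 + 1 ≠ k2 by omega)
              (show k1 + 1 ≠ k2 + 1 by omega)).trans (Aux.mul_adjSwap_apply_lt hk1).2
          have tv3 : (σ * adjSwap n k1 * adjSwap n k2) ⟨k2, Nat.lt_of_succ_lt hk2⟩ =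
              σ ⟨k2 + 1, hk2⟩ :=
            ((Aux.mul_adjSwap_apply_lt hk2).1).trans hvk21
          have tv4 : (σ * adjSwap n k1 * adjSwap n k2) ⟨k2 + 1, hk2⟩ =
              σ ⟨k2, Nat.lt_of_succ_lt hk2⟩ :=
            ((Aux.mul_adjSwap_apply_lt hk2).2).trans hvk2
          have hDt1 : DescentAt lab t.1 (k1 + 1) := by
            rw [AuxP.descent_iff hwt hk1, tv1, tv2]
            exact hasc1
          have hDt2 : DescentAt lab t.1 (k2 + 1) := by
            rw [AuxP.descent_iff hwt hk2, tv3, tv4]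
            exact hasc2
          have hid1 : σ * adjSwap n k1 * adjSwap n k2 * adjSwap n k1 = σ * adjSwap n k2 := by
            rw [mul_assoc (σ * adjSwap n k1), Aux.adjSwap_commute hcase, ← mul_assoc,
              Aux.mul_adjSwap_cancel]
          have hwt1 : HasWord lab (U (k1 + 1) t).1 (σ * adjSwap n k2) := by
            have h := AuxP.word_U_of_descent hsn hU hwt hk1 hDt1
            rwa [hid1] at h
          have ht1q : U (k1 + 1) t = q :=
            ih (σ * adjSwap n k2) (U (k1 + 1) t) q (AuxP.closure_step hct hk1) hq hwt1 hwq
              (by omega)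
          have hwt2 : HasWord lab (U (k2 + 1) t).1 (σ * adjSwap n k1) := by
            have h := AuxP.word_U_of_descent hsn hU hwt hk2 hDt2
            rwa [Aux.mul_adjSwap_cancel] at h
          have ht2p : U (k2 + 1) t = p :=
            ih (σ * adjSwap n k1) (U (k2 + 1) t) p (AuxP.closure_step hct hk2) hp hwt2 hwp
              (by omega)
          rw [← ht1q, ← ht2p]
          exact AuxP.U_comm hsn hU hk1 hk2 hcase t
        · -- braid case : k2 = k1 + 1
          have hk2eq : k2 = k1 + 1 := by omega
          subst hk2eq
          have hbc : σ ⟨k1 + 1, hk1⟩ < σ ⟨k1 + 1 + 1, hk2⟩ := hasc2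
          have hv1a : (σ * adjSwap n k1) ⟨k1, Nat.lt_of_succ_lt hk1⟩ = σ ⟨k1 + 1, hk1⟩ :=
            (Aux.mul_adjSwap_apply_lt hk1).1
          have hv1b : (σ * adjSwap n k1) ⟨k1 + 1, hk1⟩ = σ ⟨k1, Nat.lt_of_succ_lt hk1⟩ :=
            (Aux.mul_adjSwap_apply_lt hk1).2
          have hv1c : (σ * adjSwap n k1) ⟨k1 + 1 + 1, hk2⟩ = σ ⟨k1 + 1 + 1, hk2⟩ :=
            Aux.mul_adjSwap_other hk1 (show k1 + 1 + 1 ≠ k1 by omega)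
              (show k1 + 1 + 1 ≠ k1 + 1 by omega)
          have hv2a : (σ * adjSwap n k1 * adjSwap n (k1 + 1)) ⟨k1, Nat.lt_of_succ_lt hk1⟩ =
              σ ⟨k1 + 1, hk1⟩ :=
            (Aux.mul_adjSwap_other hk2 (show k1 ≠ k1 + 1 by omega)
              (show k1 ≠ k1 + 1 + 1 by omega)).trans hv1a
          have hv2b : (σ * adjSwap n k1 * adjSwap n (k1 + 1)) ⟨k1 + 1, hk1⟩ =
              σ ⟨k1 + 1 + 1, hk2⟩ :=
            ((Aux.mul_adjSwap_apply_lt hk2).1).trans hv1c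
          have hv2c : (σ * adjSwap n k1 * adjSwap n (k1 + 1)) ⟨k1 + 1 + 1, hk2⟩ =
              σ ⟨k1, Nat.lt_of_succ_lt hk1⟩ :=
            ((Aux.mul_adjSwap_apply_lt hk2).2).trans hv1b
          have hva : (σ * adjSwap n k1 * adjSwap n (k1 + 1) * adjSwap n k1)
              ⟨k1, Nat.lt_of_succ_lt hk1⟩ = σ ⟨k1 + 1 + 1, hk2⟩ :=
            ((Aux.mul_adjSwap_apply_lt hk1).1).trans hv2b
          have hvb : (σ * adjSwap n k1 * adjSwap n (k1 + 1) * adjSwap n k1)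
              ⟨k1 + 1, hk1⟩ = σ ⟨k1 + 1, hk1⟩ :=
            ((Aux.mul_adjSwap_apply_lt hk1).2).trans hv2a
          have hvc : (σ * adjSwap n k1 * adjSwap n (k1 + 1) * adjSwap n k1)
              ⟨k1 + 1 + 1, hk2⟩ = σ ⟨k1, Nat.lt_of_succ_lt hk1⟩ :=
            (Aux.mul_adjSwap_other hk1 (show k1 + 1 + 1 ≠ k1 by omega)
              (show k1 + 1 + 1 ≠ k1 + 1 by omega)).trans hv2c
          -- invSet of σ s1 s2 and of τB
          have hascmid1 : (σ * adjSwap n k1) ⟨k1 + 1, Nat.lt_of_succ_lt hk2⟩ <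
              (σ * adjSwap n k1) ⟨k1 + 1 + 1, hk2⟩ := by
            have e : (σ * adjSwap n k1) ⟨k1 + 1, Nat.lt_of_succ_lt hk2⟩ =
                σ ⟨k1, Nat.lt_of_succ_lt hk1⟩ := hv1b
            rw [e, hv1c]
            exact hasc1.trans hbc
          have hins3 := Aux.invSet_mul_adjSwap hk2 hascmid1
          have hascmid2 : (σ * adjSwap n k1 * adjSwap n (k1 + 1))
              ⟨k1, Nat.lt_of_succ_lt hk1⟩ <
              (σ * adjSwap n k1 * adjSwap n (k1 + 1)) ⟨k1 + 1, hk1⟩ := by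
            rw [hv2a, hv2b]
            exact hbc
          have hins4 := Aux.invSet_mul_adjSwap hk1 hascmid2
          have hsubτ : invSet (σ * adjSwap n k1 * adjSwap n (k1 + 1) * adjSwap n k1) ⊆
              invSet ωm := by
            rw [hins4.1]
            intro x hx
            rcases Set.mem_insert_iff.1 hx with rfl | hx
            · rw [hv2a, hv2b]
              exact hsub2 (by rw [hins2.1]; exact Set.mem_insert _ _)
            rw [hins3.1] at hx
            rcases Set.mem_insert_iff.1 hx with rfl | hx
            · have e : (σ * adjSwap n k1) ⟨k1 + 1, Nat.lt_of_succ_lt hk2⟩ =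
                  σ ⟨k1, Nat.lt_of_succ_lt hk1⟩ := hv1b
              rw [e, hv1c]
              exact Aux.invSet_trans
                (hsub1 (by rw [hins1.1]; exact Set.mem_insert _ _))
                (hsub2 (by rw [hins2.1]; exact Set.mem_insert _ _))
            rw [hins1.1] at hx
            rcases Set.mem_insert_iff.1 hx with rfl | hx
            · exact hsub1 (by rw [hins1.1]; exact Set.mem_insert _ _)
            · exact hsub1 (by rw [hins1.1]; exact Set.mem_insert_of_mem _ hx)
          obtain ⟨t, hct, hwt⟩ := AuxP.exists_chain_of_leRW hsn hU m hm
            (Aux.leRW_of_invSet_subset ωm _ hsubτ)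
          have hDt1 : DescentAt lab t.1 (k1 + 1) := by
            rw [AuxP.descent_iff hwt hk1, hvb, hva]
            exact hbc
          have hDt2 : DescentAt lab t.1 (k1 + 1 + 1) := by
            rw [AuxP.descent_iff hwt hk2, hvc, hvb]
            exact hasc1
          -- path A
          have hpa1 : HasWord lab (U (k1 + 1) t).1
              (σ * adjSwap n k1 * adjSwap n (k1 + 1)) := by
            have h := AuxP.word_U_of_descent hsn hU hwt hk1 hDt1
            rwa [Aux.mul_adjSwap_cancel] at h
          have hDA : DescentAt lab (U (k1 + 1) t).1 (k1 + 1 + 1) := by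
            rw [AuxP.descent_iff hpa1 hk2, hv2c, hv2b]
            exact hasc1.trans hbc
          have hpa2 : HasWord lab (U (k1 + 1 + 1) (U (k1 + 1) t)).1 (σ * adjSwap n k1) := by
            have h := AuxP.word_U_of_descent hsn hU hpa1 hk2 hDA
            rwa [Aux.mul_adjSwap_cancel] at h
          have htp : U (k1 + 1 + 1) (U (k1 + 1) t) = p :=
            ih (σ * adjSwap n k1) _ p
              (AuxP.closure_step (AuxP.closure_step hct hk1) hk2) hp hpa2 hwp (by omega)
          -- path B
          have hpb1 : HasWord lab (U (k1 + 1 + 1) t).1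
              (σ * adjSwap n k1 * adjSwap n (k1 + 1) * adjSwap n k1 * adjSwap n (k1 + 1)) :=
            AuxP.word_U_of_descent hsn hU hwt hk2 hDt2
          have hφa : (σ * adjSwap n k1 * adjSwap n (k1 + 1) * adjSwap n k1 *
              adjSwap n (k1 + 1)) ⟨k1, Nat.lt_of_succ_lt hk1⟩ = σ ⟨k1 + 1 + 1, hk2⟩ :=
            (Aux.mul_adjSwap_other hk2 (show k1 ≠ k1 + 1 by omega)
              (show k1 ≠ k1 + 1 + 1 by omega)).trans hva
          have hφb : (σ * adjSwap n k1 * adjSwap n (k1 + 1) * adjSwap n k1 *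
              adjSwap n (k1 + 1)) ⟨k1 + 1, hk1⟩ = σ ⟨k1, Nat.lt_of_succ_lt hk1⟩ :=
            ((Aux.mul_adjSwap_apply_lt hk2).1).trans hvc
          have hDB : DescentAt lab (U (k1 + 1 + 1) t).1 (k1 + 1) := by
            rw [AuxP.descent_iff hpb1 hk1, hφb, hφa]
            exact hasc1.trans hbc
          have hτB : σ * adjSwap n k1 * adjSwap n (k1 + 1) * adjSwap n k1 =
              σ * adjSwap n (k1 + 1) * adjSwap n k1 * adjSwap n (k1 + 1) := by
            have hb := Aux.adjSwap_braid (n := n) (k := k1) hk2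
            simp only [mul_assoc] at hb ⊢
            rw [hb]
          have hid : σ * adjSwap n k1 * adjSwap n (k1 + 1) * adjSwap n k1 *
              adjSwap n (k1 + 1) * adjSwap n k1 = σ * adjSwap n (k1 + 1) := by
            rw [hτB, Aux.mul_adjSwap_cancel (σ * adjSwap n (k1 + 1) * adjSwap n k1) (k1 + 1),
              Aux.mul_adjSwap_cancel]
          have hpb2 : HasWord lab (U (k1 + 1) (U (k1 + 1 + 1) t)).1
              (σ * adjSwap n (k1 + 1)) := by
            have h := AuxP.word_U_of_descent hsn hU hpb1 hk1 hDB
            rwa [hid] at h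
          have htq : U (k1 + 1) (U (k1 + 1 + 1) t) = q :=
            ih (σ * adjSwap n (k1 + 1)) _ q
              (AuxP.closure_step (AuxP.closure_step hct hk2) hk1) hq hpb2 hwq (by omega)
          have hbraid := AuxP.U_braid hsn hU hk2 hwt
            (by rw [hvb, hva]; exact hbc) (by rw [hvc, hvb]; exact hasc1)
          calc U (k1 + 1) p = U (k1 + 1) (U (k1 + 1 + 1) (U (k1 + 1) t)) := by rw [htp]
            _ = U (k1 + 1 + 1) (U (k1 + 1) (U (k1 + 1 + 1) t)) := hbraid
            _ = U (k1 + 1 + 1) q := by rw [htq]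
      rcases lt_trichotomy k1 k2 with h12 | heqk | h21
      · rw [heq1, heq2]
        exact key k1 k2 hk1 hk2 p q h12 hp hq hwp hwq hasc1 hasc2 hsub1 hsub2
      · subst heqk
        have hpq : p = q := ih (σ * adjSwap n k1) p q hp hq hwp hwq (by omega)
        rw [heq1, heq2, hpq]
      · rw [heq1, heq2]
        exact (key k2 k1 hk2 hk1 q p h21 hq hp hwq hwp hasc2 hasc1 hsub2 hsub1).symm
  intro σ m1 m2 h1 h2 hw1 hw2
  exact main (invCount ωm - invCount σ) σ m1 m2 h1 h2 hw1 hw2 le_rfl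
end

section
/- Every finite graded lattice of rank n that admits an S_n EL-labeling is supersolvable, with the unique maximal chain labeled by the identity permutation serving as an M-chain. -/
namespace SnSS

open Finset OrderDual

section Chains

variable {P : Type*} [PartialOrder P]

theorem satChain_le {k : ℕ} {c : ℕ → P} {x y : P} (h : IsSatChain k c x y) :
    ∀ i j : ℕ, i ≤ j → c i ≤ c j := by
  have step : ∀ j, c j ≤ c (j + 1) := by
    intro j
    rcases lt_or_ge j k with hj | hj
    · exact (h.2.2 j hj).le
    · rw [h.2.1 j hj, h.2.1 (j + 1) (le_trans hj (Nat.le_succ j))]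
  intro i j hij
  induction j, hij using Nat.le_induction with
  | base => exact le_rfl
  | succ m hm ih => exact le_trans ih (step m)

theorem satChain_le_top {k : ℕ} {c : ℕ → P} {x y : P} (h : IsSatChain k c x y) (j : ℕ) :
    c j ≤ y := by
  rcases le_or_gt k j with hj | hj
  · exact (h.2.1 j hj).le
  · rw [← h.2.1 k le_rfl]; exact satChain_le h j k hj.le

theorem satChain_bot_le {k : ℕ} {c : ℕ → P} {x y : P} (h : IsSatChain k c x y) (j : ℕ) :
    x ≤ c j := by
  rw [← h.1]; exact satChain_le h 0 j (Nat.zero_le j)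

theorem satChain_const (x : P) : IsSatChain 0 (fun _ => x) x x :=
  ⟨rfl, fun _ _ => rfl, fun j hj => absurd hj (Nat.not_lt_zero j)⟩

theorem exists_cover_of_lt [Finite P] {x y : P} (h : x < y) : ∃ z, x ⋖ z ∧ z ≤ y := by
  obtain ⟨z, hz, hmin⟩ : ∃ z ∈ {z | x < z ∧ z ≤ y}, ∀ w ∈ {z | x < z ∧ z ≤ y},
      id w ≤ id z → id z = id w := by
    obtain ⟨z, hz⟩ := (Set.toFinite {z | x < z ∧ z ≤ y}).exists_minimal ⟨y, h, le_rfl⟩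
    exact ⟨z, hz.1, fun w hw hwz => le_antisymm (hz.2 hw hwz) hwz⟩
  refine ⟨z, ⟨hz.1, fun w hw hwz => ?_⟩, hz.2⟩
  have := hmin w ⟨hw, le_trans hwz.le hz.2⟩ hwz.le
  exact absurd this.symm (ne_of_lt hwz)

/-- prepend a cover step to a chain -/
theorem satChain_cons {k : ℕ} {c : ℕ → P} {x y z : P} (hxz : x ⋖ z)
    (h : IsSatChain k c z y) :
    IsSatChain (k + 1) (fun j => if j = 0 then x else c (j - 1)) x y := by
  refine ⟨by simp, fun j hj => ?_, fun j hj => ?_⟩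
  · have : j ≠ 0 := by omega
    simp only [this, if_false]
    exact h.2.1 (j - 1) (by omega)
  · rcases Nat.eq_zero_or_pos j with rfl | hj0
    · simpa [h.1] using hxz
    · have h1 : j ≠ 0 := by omega
      have h2 : j + 1 ≠ 0 := by omega
      simp only [h1, h2, if_false]
      have : j + 1 - 1 = (j - 1) + 1 := by omega
      rw [this]
      exact h.2.2 (j - 1) (by omega)

theorem exists_satChain [Finite P] {x y : P} (h : x ≤ y) : ∃ k c, IsSatChain k c x y := by
  have wf : WellFoundedGT P := inferInstance
  induction x using WellFoundedGT.induction with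
  | _ x ih =>
    rcases eq_or_lt_of_le h with rfl | hlt
    · exact ⟨0, fun _ => x, satChain_const x⟩
    · obtain ⟨z, hxz, hzy⟩ := exists_cover_of_lt hlt
      obtain ⟨k, c, hc⟩ := ih z hxz.lt hzy
      exact ⟨k + 1, _, satChain_cons hxz hc⟩

end Chains

end SnSS
namespace SnSS

section Labs

variable {P : Type*} [PartialOrder P] (lab : P → P → ℤ)

/-- The set of labels on the first `k` edges of `c`. -/
def labs (k : ℕ) (c : ℕ → P) : Finset ℤ :=
  (Finset.range k).image fun j => lab (c j) (c (j + 1))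

theorem mem_labs {k : ℕ} {c : ℕ → P} {a : ℤ} :
    a ∈ labs lab k c ↔ ∃ j, j < k ∧ lab (c j) (c (j + 1)) = a := by
  simp [labs, Finset.mem_image, Finset.mem_range]

theorem labs_zero (c : ℕ → P) : labs lab 0 c = ∅ := by simp [labs]

theorem labs_congr {k : ℕ} {c d : ℕ → P} (h : ∀ j, j ≤ k → c j = d j) :
    labs lab k c = labs lab k d := by
  unfold labs
  refine Finset.image_congr fun j hj => ?_
  rw [Finset.mem_coe, Finset.mem_range] at hj
  rw [h j hj.le, h (j + 1) hj]

/-- Concatenation of chains. -/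
def splice (k : ℕ) (c d : ℕ → P) : ℕ → P := fun j => if j < k then c j else d (j - k)

variable {k l : ℕ} {c d : ℕ → P} {x y z : P}

theorem splice_eval_le (hc : IsSatChain k c x y) (hd : IsSatChain l d y z)
    {j : ℕ} (hj : j ≤ k) : splice k c d j = c j := by
  unfold splice
  split
  · rfl
  · have hjk : j = k := by omega
    subst hjk
    rw [Nat.sub_self, hd.1, hc.2.1 j le_rfl]

theorem splice_eval_ge {j : ℕ} (hj : k ≤ j) : splice k c d j = d (j - k) := by
  unfold splice
  split
  · omega
  · rfl

theorem satChain_splice (hc : IsSatChain k c x y) (hd : IsSatChain l d y z) :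
    IsSatChain (k + l) (splice k c d) x z := by
  refine ⟨?_, fun j hj => ?_, fun j hj => ?_⟩
  · rw [splice_eval_le hc hd (Nat.zero_le k), hc.1]
  · rw [splice_eval_ge (by omega)]
    exact hd.2.1 _ (by omega)
  · rcases lt_or_ge (j + 1) k with h1 | h1
    · rw [splice_eval_le hc hd (by omega), splice_eval_le hc hd (by omega)]
      exact hc.2.2 j (by omega)
    · rcases lt_or_ge j k with h2 | h2
      · rw [splice_eval_le hc hd (by omega), splice_eval_le hc hd (by omega)]
        exact hc.2.2 j h2
      · rw [splice_eval_ge h2, splice_eval_ge (by omega)]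
        have : j + 1 - k = (j - k) + 1 := by omega
        rw [this]
        exact hd.2.2 _ (by omega)

theorem labs_splice (hc : IsSatChain k c x y) (hd : IsSatChain l d y z) :
    labs lab (k + l) (splice k c d) = labs lab k c ∪ labs lab l d := by
  ext a
  rw [Finset.mem_union, mem_labs, mem_labs, mem_labs]
  constructor
  · rintro ⟨j, hj, rfl⟩
    rcases lt_or_ge j k with h2 | h2
    · left
      refine ⟨j, h2, ?_⟩
      rw [splice_eval_le hc hd (by omega), splice_eval_le hc hd (by omega)]
    · right
      refine ⟨j - k, by omega, ?_⟩
      rw [splice_eval_ge h2, splice_eval_ge (by omega)]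
      have : j + 1 - k = (j - k) + 1 := by omega
      rw [this]
  · rintro (⟨j, hj, rfl⟩ | ⟨j, hj, rfl⟩)
    · refine ⟨j, by omega, ?_⟩
      rw [splice_eval_le hc hd (by omega), splice_eval_le hc hd (by omega)]
    · refine ⟨j + k, by omega, ?_⟩
      rw [splice_eval_ge (by omega), splice_eval_ge (by omega)]
      have e1 : j + k - k = j := by omega
      have e2 : j + k + 1 - k = j + 1 := by omega
      rw [e1, e2]

theorem satChain_tail (hc : IsSatChain k c x y) {i : ℕ} (hi : i ≤ k) :
    IsSatChain (k - i) (fun j => c (i + j)) (c i) y := by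
  refine ⟨by simp, fun j hj => hc.2.1 _ (by omega), fun j hj => hc.2.2 _ (by omega)⟩

theorem satChain_head (hc : IsSatChain k c x y) {i : ℕ} (hi : i ≤ k) :
    IsSatChain i (fun j => c (min j i)) x (c i) := by
  refine ⟨?_, fun j hj => ?_, fun j hj => ?_⟩
  · show c (min 0 i) = x
    rw [Nat.zero_min]
    exact hc.1
  · show c (min j i) = c i
    rw [min_eq_right hj]
  · show c (min j i) ⋖ c (min (j + 1) i)
    rw [min_eq_left (by omega), min_eq_left (by omega)]
    exact hc.2.2 j (by omega)

end Labs

end SnSS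
namespace SnSS

section Core

variable {P : Type*} [SemilatticeSup P] [Finite P]

/-- The label set of the interval `[x,y]` (via a choice of saturated chain). -/
noncomputable def Fset (lab : P → P → ℤ) (x y : P) : Finset ℤ :=
  letI := Classical.dec (∃ k c, IsSatChain k c x y)
  if h : ∃ k c, IsSatChain k c x y then labs lab h.choose h.choose_spec.choose else ∅

/-- The package of hypotheses for the core development: a rank function compatible
with covers, and a labeling with chain-independent label sets, distinct labels on
saturated chains, and unique increasing chains in every interval. -/
structure Pack (rk : P → ℕ) (lab : P → P → ℤ) : Prop where
  hcov : ∀ {x y : P}, x ⋖ y → rk y = rk x + 1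
  hinv : ∀ (x y : P) (k : ℕ) (c d : ℕ → P), IsSatChain k c x y →
    IsSatChain k d x y → labs lab k c = labs lab k d
  hdist : ∀ (x y : P) (k : ℕ) (c : ℕ → P), IsSatChain k c x y →
    ∀ i j, i < j → j < k → lab (c i) (c (i + 1)) ≠ lab (c j) (c (j + 1))
  hincEx : ∀ (x y : P), x < y → ∀ (k : ℕ) (c₀ : ℕ → P), IsSatChain k c₀ x y →
    ∃ c, IsSatChain k c x y ∧ IncreasingChain lab k c
  hincUniq : ∀ (x y : P) (k : ℕ) (c d : ℕ → P), IsSatChain k c x y →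
    IncreasingChain lab k c → IsSatChain k d x y → IncreasingChain lab k d → c = d

variable {rk : P → ℕ} {lab : P → P → ℤ}
variable {x y z s t v w : P} {k l : ℕ} {c d : ℕ → P}

section RankOnly

variable (hcov : ∀ {x y : P}, x ⋖ y → rk y = rk x + 1)
include hcov

theorem satChain_rk (hc : IsSatChain k c x y) : ∀ j, j ≤ k → rk (c j) = rk x + j := by
  intro j hj
  induction j with
  | zero => rw [hc.1]; omega
  | succ i ih => rw [hcov (hc.2.2 i (by omega)), ih (by omega)]; omega

theorem satChain_len (hc : IsSatChain k c x y) : rk y = rk x + k := by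
  rw [← hc.2.1 k le_rfl]; exact satChain_rk hcov hc k le_rfl

theorem rk_lt_of_lt (h : x < y) : rk x < rk y := by
  obtain ⟨k, c, hc⟩ := exists_satChain h.le
  have hk : k ≠ 0 := by
    rintro rfl
    exact absurd (hc.1 ▸ hc.2.1 0 le_rfl : x = y) h.ne
  have := satChain_len hcov hc
  omega

theorem rk_le_of_le (h : x ≤ y) : rk x ≤ rk y := by
  rcases eq_or_lt_of_le h with rfl | h
  · exact le_rfl
  · exact (rk_lt_of_lt hcov h).le

theorem eq_of_le_of_rk_le (h : x ≤ y) (hr : rk y ≤ rk x) : x = y := by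
  rcases eq_or_lt_of_le h with rfl | h
  · rfl
  · exact absurd (rk_lt_of_lt hcov h) (by omega)

end RankOnly

variable (hp : Pack rk lab)
include hp

theorem labs_eq_labs (hc : IsSatChain k c x y) (hd : IsSatChain l d x y) :
    labs lab k c = labs lab l d := by
  have hkl : k = l := by
    have h1 := satChain_len hp.hcov hc
    have h2 := satChain_len hp.hcov hd
    omega
  subst hkl
  exact hp.hinv x y k c d hc hd

theorem labs_eq_F (hc : IsSatChain k c x y) : labs lab k c = Fset lab x y := by
  unfold Fset
  letI := Classical.dec (∃ k c, IsSatChain k c x y)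
  have h : ∃ k c, IsSatChain k c x y := ⟨k, c, hc⟩
  rw [dif_pos h]
  exact labs_eq_labs hp hc h.choose_spec.choose_spec

theorem F_self : Fset lab x x = ∅ := by
  rw [← labs_eq_F hp (satChain_const x), labs_zero]

theorem F_union (hxy : x ≤ y) (hyz : y ≤ z) :
    Fset lab x z = Fset lab x y ∪ Fset lab y z := by
  obtain ⟨k, c, hc⟩ := exists_satChain hxy
  obtain ⟨l, d, hd⟩ := exists_satChain hyz
  rw [← labs_eq_F hp hc, ← labs_eq_F hp hd,
    ← labs_eq_F hp (satChain_splice hc hd), labs_splice lab hc hd]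

theorem F_mono_right (hxy : x ≤ y) (hyz : y ≤ z) : Fset lab x y ⊆ Fset lab x z := by
  rw [F_union hp hxy hyz]; exact Finset.subset_union_left

theorem F_mono_left (hxy : x ≤ y) (hyz : y ≤ z) : Fset lab y z ⊆ Fset lab x z := by
  rw [F_union hp hxy hyz]; exact Finset.subset_union_right

theorem F_cover (hxy : x ⋖ y) : Fset lab x y = {lab x y} := by
  have hc : IsSatChain 1 (fun j => if j = 0 then x else y) x y := by
    have h0 := satChain_cons hxy (satChain_const y)
    exact h0
  rw [← labs_eq_F hp hc]
  ext a
  rw [mem_labs, Finset.mem_singleton]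
  constructor
  · rintro ⟨j, hj, rfl⟩
    interval_cases j
    simp
  · rintro rfl
    exact ⟨0, by omega, by simp⟩

theorem mem_F_of_cover_le (hxv : x ⋖ v) (hvy : v ≤ y) : lab x v ∈ Fset lab x y := by
  have := F_mono_right hp hxv.le hvy
  rw [F_cover hp hxv] at this
  exact this (Finset.mem_singleton_self _)

theorem F_card (hxy : x ≤ y) : (Fset lab x y).card = rk y - rk x := by
  obtain ⟨k, c, hc⟩ := exists_satChain hxy
  rw [← labs_eq_F hp hc]
  unfold labs
  rw [Finset.card_image_of_injOn, Finset.card_range]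
  · have := satChain_len hp.hcov hc; omega
  · intro i hi j hj hij
    rw [Finset.mem_coe, Finset.mem_range] at hi hj
    by_contra hne
    rcases lt_or_gt_of_ne hne with h | h
    · exact hp.hdist x y k c hc i j h hj hij
    · exact hp.hdist x y k c hc j i h hi hij.symm

theorem F_disjoint (hxy : x ≤ y) (hyz : y ≤ z) :
    Disjoint (Fset lab x y) (Fset lab y z) := by
  obtain ⟨k, c, hc⟩ := exists_satChain hxy
  obtain ⟨l, d, hd⟩ := exists_satChain hyz
  rw [← labs_eq_F hp hc, ← labs_eq_F hp hd]
  rw [Finset.disjoint_left]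
  rintro a hac had
  rw [mem_labs] at hac had
  obtain ⟨i, hi, hie⟩ := hac
  obtain ⟨j, hj, hje⟩ := had
  have hsp := satChain_splice hc hd
  have e1 : lab (splice k c d i) (splice k c d (i + 1)) = lab (c i) (c (i + 1)) := by
    rw [splice_eval_le hc hd (by omega), splice_eval_le hc hd (by omega)]
  have e2 : lab (splice k c d (k + j)) (splice k c d (k + j + 1)) =
      lab (d j) (d (j + 1)) := by
    rw [splice_eval_ge (by omega), splice_eval_ge (by omega)]
    have e3 : k + j - k = j := by omega
    have e4 : k + j + 1 - k = j + 1 := by omega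
    rw [e3, e4]
  exact hp.hdist x z (k + l) _ hsp i (k + j) (by omega) (by omega)
    (by rw [e1, e2, hie, hje])

end Core

end SnSS
namespace SnSS

section Core2

variable {P : Type*} [SemilatticeSup P] [Finite P]
variable {rk : P → ℕ} {lab : P → P → ℤ} (hp : Pack rk lab)
variable {x y z s v w : P} {k : ℕ} {c d : ℕ → P}

include hp

theorem inc_label_mono (hc : IsSatChain k c x y) (hi : IncreasingChain lab k c) :
    ∀ i j, i ≤ j → j < k → lab (c i) (c (i + 1)) ≤ lab (c j) (c (j + 1)) := by
  intro i j hij hjk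
  induction j, hij using Nat.le_induction with
  | base => exact le_rfl
  | succ m hm ih => exact le_trans (ih (by omega)) (hi m (by omega))

theorem first_label_min (hc : IsSatChain k c x y) (hi : IncreasingChain lab k c) :
    ∀ a ∈ Fset lab x y, lab (c 0) (c 1) ≤ a := by
  intro a ha
  rw [← labs_eq_F hp hc, mem_labs] at ha
  obtain ⟨j, hj, rfl⟩ := ha
  exact inc_label_mono hp hc hi 0 j (Nat.zero_le j) hj

theorem last_label_max (hc : IsSatChain k c x y) (hi : IncreasingChain lab k c) :
    ∀ a ∈ Fset lab x y, a ≤ lab (c (k - 1)) (c k) := by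
  intro a ha
  rw [← labs_eq_F hp hc, mem_labs] at ha
  obtain ⟨j, hj, rfl⟩ := ha
  have := inc_label_mono hp hc hi j (k - 1) (by omega) (by omega)
  have e : k - 1 + 1 = k := by omega
  rw [e] at this
  exact this

/-- E2: there is at most one cover of `x` inside `[x,y]` whose label is the minimum
of the label set of `[x,y]`. -/
theorem cover_min_unique (hxv : x ⋖ v) (hvy : v ≤ y) (hxw : x ⋖ w) (hwy : w ≤ y)
    (hmin : ∀ a ∈ Fset lab x y, lab x w ≤ a) (heq : lab x v = lab x w) : v = w := by
  rcases eq_or_lt_of_le hvy with rfl | hvy'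
  · exact (eq_of_le_of_rk_le hp.hcov hwy
      (le_of_eq (by rw [hp.hcov hxw, hp.hcov hxv]))).symm
  rcases eq_or_lt_of_le hwy with rfl | hwy'
  · exact absurd (rk_lt_of_lt hp.hcov hvy')
      (by rw [hp.hcov hxw, hp.hcov hxv]; omega)
  obtain ⟨k1, d1, hd1⟩ := exists_satChain hvy'.le
  obtain ⟨d1', hd1', hi1⟩ := hp.hincEx v y hvy' k1 d1 hd1
  obtain ⟨k2, d2, hd2⟩ := exists_satChain hwy'.le
  obtain ⟨d2', hd2', hi2⟩ := hp.hincEx w y hwy' k2 d2 hd2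
  have hs1 : IsSatChain (k1 + 1) _ x y := satChain_cons hxv hd1'
  have hs2 : IsSatChain (k2 + 1) _ x y := satChain_cons hxw hd2'
  have hk12 : k1 = k2 := by
    have e1 := satChain_len hp.hcov hs1
    have e2 := satChain_len hp.hcov hs2
    omega
  subst hk12
  have hinc : ∀ (v' : P) (d' : ℕ → P), x ⋖ v' → v' ≤ y → IsSatChain k1 d' v' y →
      IncreasingChain lab k1 d' → lab x v' = lab x w →
      IncreasingChain lab (k1 + 1) (fun j => if j = 0 then x else d' (j - 1)) := by
    intro v' d' hxv' hv'y hd' hi' hlv'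
    have E : ∀ j : ℕ, (fun j => if j = 0 then x else d' (j - 1)) (j + 1) = d' j := by
      intro j; simp
    intro j hj
    rcases Nat.eq_zero_or_pos j with rfl | hj0
    · show lab _ _ ≤ lab _ _
      rw [E 0, E 1]
      show lab (if (0:ℕ) = 0 then x else _) (d' 0) ≤ _
      have hm1 : lab (d' 0) (d' 1) ∈ Fset lab v' y := by
        rw [← labs_eq_F hp hd', mem_labs]
        exact ⟨0, by omega, rfl⟩
      rw [hd'.1] at hm1
      rw [if_pos rfl, hd'.1, hlv']
      exact hmin _ (F_mono_left hp hxv'.le hv'y hm1)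
    · obtain ⟨i, rfl⟩ : ∃ i, j = i + 1 := ⟨j - 1, by omega⟩
      show lab _ _ ≤ lab _ _
      rw [E i, E (i + 1), E (i + 2)]
      exact hi' i (by omega)
  have q1 := hinc v d1' hxv hvy'.le hd1' hi1 heq
  have q2 := hinc w d2' hxw hwy'.le hd2' hi2 rfl
  have := hp.hincUniq x y (k1 + 1) _ _ hs1 q1 hs2 q2
  have ev : v = d1' 0 := hd1'.1.symm
  have ew : w = d2' 0 := hd2'.1.symm
  rw [ev, ew]
  have := congrFun this 1
  simpa using this

end Core2

end SnSS
namespace SnSS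

section Core3

variable {P : Type*} [SemilatticeSup P] [Finite P]
variable {rk : P → ℕ} {lab : P → P → ℤ} (hp : Pack rk lab)
variable {x y z s v w : P}

include hp

/-- SM-min: if `s, w` are two distinct covers of `x` and the label of `w` is minimal
in `[x, s ⊔ w]`, then `s ⊔ w` covers `s` with the same label. -/
theorem sm_min (hxs : x ⋖ s) (hxw : x ⋖ w) (hsw : s ≠ w)
    (hmin : ∀ a ∈ Fset lab x (s ⊔ w), lab x w ≤ a) :
    s ⋖ s ⊔ w ∧ lab s (s ⊔ w) = lab x w := by
  have hsT : s ≤ s ⊔ w := le_sup_left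
  have hwT : w ≤ s ⊔ w := le_sup_right
  have hrs : rk s = rk x + 1 := hp.hcov hxs
  have hrw : rk w = rk x + 1 := hp.hcov hxw
  have hsne : s ≠ s ⊔ w := by
    intro h
    have hws : w ≤ s := h ▸ hwT
    rcases eq_or_lt_of_le hws with h' | h'
    · exact hsw h'.symm
    · have := rk_lt_of_lt hp.hcov h'; omega
  have hsltT : s < s ⊔ w := lt_of_le_of_ne hsT hsne
  have hm_mem : lab x w ∈ Fset lab x (s ⊔ w) := mem_F_of_cover_le hp hxw hwT
  have hcc_ne : lab x s ≠ lab x w := by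
    intro h
    exact hsw (cover_min_unique hp hxs hsT hxw hwT hmin h)
  have hm_in_sT : lab x w ∈ Fset lab s (s ⊔ w) := by
    have h0 : lab x w ∈ Fset lab x s ∪ Fset lab s (s ⊔ w) := by
      rw [← F_union hp hxs.le hsT]; exact hm_mem
    rcases Finset.mem_union.mp h0 with h | h
    · rw [F_cover hp hxs, Finset.mem_singleton] at h
      exact absurd h.symm hcc_ne
    · exact h
  have hminsT : ∀ a ∈ Fset lab s (s ⊔ w), lab x w ≤ a := fun a ha =>
    hmin a (F_mono_left hp hxs.le hsT ha)
  obtain ⟨q0, d0, hd0⟩ := exists_satChain hsltT.le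
  obtain ⟨d, hd, hdi⟩ := hp.hincEx s (s ⊔ w) hsltT q0 d0 hd0
  have hq : rk (s ⊔ w) = rk s + q0 := satChain_len hp.hcov hd
  have hq1 : 1 ≤ q0 := by
    have := rk_lt_of_lt hp.hcov hsltT; omega
  have hd0s : d 0 = s := hd.1
  have hlab1 : lab s (d 1) = lab x w := by
    have h1 : lab (d 0) (d 1) ∈ Fset lab s (s ⊔ w) := by
      rw [← labs_eq_F hp hd, mem_labs]; exact ⟨0, by omega, rfl⟩
    have h2 := first_label_min hp hd hdi _ hm_in_sT
    rw [hd0s] at h1 h2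
    exact le_antisymm h2 (hminsT _ h1)
  by_cases hq1' : q0 = 1
  · have hdT : d 1 = s ⊔ w := hd.2.1 1 (by omega)
    have hcov1 : d 0 ⋖ d 1 := hd.2.2 0 (by omega)
    rw [hd0s, hdT] at hcov1
    rw [hdT] at hlab1
    exact ⟨hcov1, hlab1⟩
  · exfalso
    have hrd1 : rk (d 1) = rk s + 1 := by
      have := satChain_rk hp.hcov hd 1 (by omega); omega
    have hs1T : d 1 ≠ s ⊔ w := by
      intro h; rw [h] at hrd1; omega
    have hs1leT : d 1 ≤ s ⊔ w := satChain_le_top hd 1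
    have hss1 : s ⋖ d 1 := by
      have := hd.2.2 0 (by omega); rwa [hd0s] at this
    have hxs1 : x < d 1 := lt_trans hxs.lt hss1.lt
    obtain ⟨k2, e0, he0⟩ := exists_satChain hxs1.le
    obtain ⟨e, he, hei⟩ := hp.hincEx x (d 1) hxs1 k2 e0 he0
    have hk2 : k2 = 2 := by
      have h1 := satChain_len hp.hcov he
      omega
    subst hk2
    have hFxd1 : Fset lab x (d 1) = {lab x s} ∪ {lab s (d 1)} := by
      rw [F_union hp hxs.le hss1.le, F_cover hp hxs, F_cover hp hss1]
    have hl1 : lab (e 0) (e 1) ∈ Fset lab x (d 1) := by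
      rw [← labs_eq_F hp he, mem_labs]; exact ⟨0, by omega, rfl⟩
    have hl2 : lab (e 1) (e 2) ∈ Fset lab x (d 1) := by
      rw [← labs_eq_F hp he, mem_labs]; exact ⟨1, by omega, rfl⟩
    have hl12 : lab (e 0) (e 1) ≤ lab (e 1) (e 2) := hei 0 (by omega)
    have hlne : lab (e 0) (e 1) ≠ lab (e 1) (e 2) :=
      hp.hdist x (d 1) 2 e he 0 1 (by omega) (by omega)
    have hmlcc : lab x w < lab x s :=
      lt_of_le_of_ne (hmin (lab x s) (mem_F_of_cover_le hp hxs hsT)) (Ne.symm hcc_ne)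
    have hfirst : lab (e 0) (e 1) = lab x w := by
      rw [hFxd1] at hl1 hl2
      rcases Finset.mem_union.mp hl1 with h | h
      · rw [Finset.mem_singleton] at h
        rcases Finset.mem_union.mp hl2 with h2 | h2 <;> rw [Finset.mem_singleton] at h2
        · exact absurd (h.trans h2.symm) hlne
        · rw [hlab1] at h2; omega
      · rw [Finset.mem_singleton, hlab1] at h
        exact h
    have hxe1 : x ⋖ e 1 := by
      have := he.2.2 0 (by omega); rwa [he.1] at this
    have he1d1 : e 1 ≤ d 1 := by
      rw [← he.2.1 2 le_rfl]; exact satChain_le he 1 2 (by omega)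
    rw [he.1] at hfirst
    have he1w : e 1 = w :=
      cover_min_unique hp hxe1 (le_trans he1d1 hs1leT) hxw hwT hmin hfirst
    have hTle : s ⊔ w ≤ d 1 := sup_le hss1.le (he1w ▸ he1d1)
    exact hs1T (le_antisymm hs1leT hTle)

/-- K: a cover `w` of `x` with minimal label in `[x,y]` joins with any `z ∈ [x,y]`
either trivially or in a cover step with the same label. -/
theorem coreK : ∀ (dd : ℕ) {x w z y : P}, x ⋖ w → w ≤ y → x ≤ z → z ≤ y →
    rk z ≤ rk x + dd → (∀ a ∈ Fset lab x y, lab x w ≤ a) →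
    w ≤ z ∨ (z ⋖ z ⊔ w ∧ lab z (z ⊔ w) = lab x w) := by
  intro dd
  induction dd with
  | zero =>
    intro x w z y hxw hwy hxz hzy hrk hmin
    have hzx : z = x := (eq_of_le_of_rk_le hp.hcov hxz (by omega)).symm
    subst hzx
    right
    rw [sup_eq_right.mpr hxw.le]
    exact ⟨hxw, rfl⟩
  | succ dd ih =>
    intro x w z y hxw hwy hxz hzy hrk hmin
    rcases le_or_gt (rk z) (rk x + dd) with h | h
    · exact ih hxw hwy hxz hzy h hmin
    have hxz' : x < z := by
      rcases eq_or_lt_of_le hxz with rfl | h'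
      · exact absurd h (by omega)
      · exact h'
    obtain ⟨s, hxs, hsz⟩ := exists_cover_of_lt hxz'
    by_cases hcm : lab x s = lab x w
    · left
      have := cover_min_unique hp hxs (le_trans hsz hzy) hxw hwy hmin hcm
      rw [← this]; exact hsz
    · have hsw : s ≠ w := fun hh => hcm (by rw [hh])
      have hTy : s ⊔ w ≤ y := sup_le (le_trans hsz hzy) hwy
      have hminT : ∀ a ∈ Fset lab x (s ⊔ w), lab x w ≤ a := fun a ha =>
        hmin a (F_mono_right hp (le_trans hxs.le le_sup_left) hTy ha)
      obtain ⟨hsT, hlabT⟩ := sm_min hp hxs hxw hsw hminT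
      have hminsy : ∀ a ∈ Fset lab s y, lab s (s ⊔ w) ≤ a := by
        intro a ha
        rw [hlabT]
        exact hmin a (F_mono_left hp hxs.le (le_trans hsz hzy) ha)
      have hrks : rk z ≤ rk s + dd := by
        have := hp.hcov hxs; omega
      rcases ih hsT hTy hsz hzy hrks hminsy with h' | ⟨h1, h2⟩
      · left; exact le_trans le_sup_right h'
      · right
        have hzT : z ⊔ (s ⊔ w) = z ⊔ w := by
          rw [← sup_assoc, sup_eq_left.mpr hsz]
        rw [hzT] at h1 h2
        exact ⟨h1, by rw [h2, hlabT]⟩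

end Core3

end SnSS
namespace SnSS

section DualTransfer

open OrderDual

variable {P : Type*} [PartialOrder P] {k : ℕ} {x y : P}

/-- Reversal of a primal saturated chain gives a dual saturated chain. -/
theorem satChain_rev {c : ℕ → P} (hc : IsSatChain k c x y) :
    IsSatChain (P := Pᵒᵈ) k (fun j => toDual (c (k - j))) (toDual y) (toDual x) := by
  refine ⟨?_, fun j hj => ?_, fun j hj => ?_⟩
  · show toDual (c (k - 0)) = toDual y
    rw [Nat.sub_zero, hc.2.1 k le_rfl]
  · show toDual (c (k - j)) = toDual x
    rw [(by omega : k - j = 0), hc.1]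
  · show toDual (c (k - j)) ⋖ toDual (c (k - (j + 1)))
    rw [toDual_covBy_toDual_iff]
    have e : k - j = (k - (j + 1)) + 1 := by omega
    rw [e]
    exact hc.2.2 _ (by omega)

/-- Reversal of a dual saturated chain gives a primal saturated chain. -/
theorem satChain_unrev {e : ℕ → Pᵒᵈ} {a b : Pᵒᵈ} (hc : IsSatChain k e a b) :
    IsSatChain k (fun j => ofDual (e (k - j))) (ofDual b) (ofDual a) := by
  refine ⟨?_, fun j hj => ?_, fun j hj => ?_⟩
  · show ofDual (e (k - 0)) = ofDual b
    rw [Nat.sub_zero, hc.2.1 k le_rfl]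
  · show ofDual (e (k - j)) = ofDual a
    rw [(by omega : k - j = 0), hc.1]
  · show ofDual (e (k - j)) ⋖ ofDual (e (k - (j + 1)))
    rw [ofDual_covBy_ofDual_iff]
    have e' : k - j = (k - (j + 1)) + 1 := by omega
    rw [e']
    exact hc.2.2 _ (by omega)

variable (lab : P → P → ℤ)

/-- The dual labeling. -/
def dualLab : Pᵒᵈ → Pᵒᵈ → ℤ := fun u v => - lab (ofDual v) (ofDual u)

theorem dual_label_eq {e : ℕ → Pᵒᵈ} {j : ℕ} (hj : j < k) :
    dualLab lab (e j) (e (j + 1)) =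
      -(lab ((fun t => ofDual (e (k - t))) (k - 1 - j))
        ((fun t => ofDual (e (k - t))) ((k - 1 - j) + 1))) := by
  show -(lab (ofDual (e (j + 1))) (ofDual (e j))) =
    -(lab (ofDual (e (k - (k - 1 - j)))) (ofDual (e (k - ((k - 1 - j) + 1)))))
  have e1 : k - (k - 1 - j) = j + 1 := by omega
  have e2 : k - ((k - 1 - j) + 1) = j := by omega
  rw [e1, e2]

theorem labs_dual_eq {e : ℕ → Pᵒᵈ} :
    labs (dualLab lab) k e =
      (labs lab k (fun t => ofDual (e (k - t)))).image (fun l => -l) := by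
  ext a
  rw [mem_labs, Finset.mem_image]
  constructor
  · rintro ⟨j, hj, rfl⟩
    refine ⟨-(dualLab lab (e j) (e (j + 1))), ?_, by ring⟩
    rw [mem_labs]
    exact ⟨k - 1 - j, by omega, by rw [dual_label_eq lab hj]; ring⟩
  · rintro ⟨b, hb, rfl⟩
    rw [mem_labs] at hb
    obtain ⟨t, ht, rfl⟩ := hb
    refine ⟨k - 1 - t, by omega, ?_⟩
    rw [dual_label_eq lab (by omega : k - 1 - t < k)]
    have e1 : k - 1 - (k - 1 - t) = t := by omega
    rw [e1]

theorem inc_rev {c : ℕ → P} (hi : IncreasingChain lab k c) :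
    IncreasingChain (dualLab lab) k (fun j => toDual (c (k - j))) := by
  intro j hj
  show -(lab (ofDual (toDual (c (k - (j + 1))))) (ofDual (toDual (c (k - j))))) ≤
    -(lab (ofDual (toDual (c (k - (j + 2))))) (ofDual (toDual (c (k - (j + 1))))))
  simp only [ofDual_toDual]
  have h1 := hi (k - (j + 2)) (by omega)
  have e1 : k - (j + 2) + 1 = k - (j + 1) := by omega
  have e2 : k - (j + 2) + 2 = k - j := by omega
  rw [e1, e2] at h1
  omega

theorem inc_unrev {e : ℕ → Pᵒᵈ} (hi : IncreasingChain (dualLab lab) k e) :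
    IncreasingChain lab k (fun t => ofDual (e (k - t))) := by
  intro j hj
  show lab (ofDual (e (k - j))) (ofDual (e (k - (j + 1)))) ≤
    lab (ofDual (e (k - (j + 1)))) (ofDual (e (k - (j + 2))))
  have h1 := hi (k - (j + 2)) (by omega)
  have g1 : dualLab lab (e (k - (j + 2))) (e ((k - (j + 2)) + 1)) =
      -(lab (ofDual (e (k - (j + 1)))) (ofDual (e (k - (j + 2))))) := by
    show -(lab (ofDual (e ((k - (j+2)) + 1))) _) = _
    rw [(by omega : k - (j + 2) + 1 = k - (j + 1))]
  have g2 : dualLab lab (e ((k - (j + 2)) + 1)) (e ((k - (j + 2)) + 2)) =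
      -(lab (ofDual (e (k - j))) (ofDual (e (k - (j + 1))))) := by
    show -(lab (ofDual (e ((k - (j+2)) + 2))) (ofDual (e ((k - (j+2)) + 1)))) = _
    rw [(by omega : k - (j + 2) + 1 = k - (j + 1)), (by omega : k - (j + 2) + 2 = k - j)]
  rw [g1, g2] at h1
  omega

end DualTransfer

end SnSS
namespace SnSS

section DualPack

open OrderDual

variable {P : Type*} [Lattice P] [Finite P] {n : ℕ}
variable {rk : P → ℕ} {lab : P → P → ℤ}

theorem dualPack (hp : Pack rk lab) (hbound : ∀ x : P, rk x ≤ n) :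
    Pack (P := Pᵒᵈ) (fun u => n - rk (ofDual u)) (dualLab lab) := by
  constructor
  · -- hcov
    intro u v huv
    have h1 : ofDual v ⋖ ofDual u := ofDual_covBy_ofDual_iff.mpr huv
    have h2 := hp.hcov h1
    have h3 := hbound (ofDual u)
    omega
  · -- hinv
    intro x y k c d hc hd
    rw [labs_dual_eq lab, labs_dual_eq lab]
    exact congrArg _ (hp.hinv _ _ k _ _ (satChain_unrev hc) (satChain_unrev hd))
  · -- hdist
    intro x y k c hc i j hij hjk hEq
    rw [dual_label_eq lab (by omega : i < k), dual_label_eq lab hjk] at hEq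
    have h2 : lab ((fun t => ofDual (c (k - t))) (k - 1 - j))
        ((fun t => ofDual (c (k - t))) ((k - 1 - j) + 1)) =
        lab ((fun t => ofDual (c (k - t))) (k - 1 - i))
        ((fun t => ofDual (c (k - t))) ((k - 1 - i) + 1)) := by omega
    exact hp.hdist _ _ k _ (satChain_unrev hc) (k - 1 - j) (k - 1 - i)
      (by omega) (by omega) h2
  · -- hincEx
    intro x y hxy k c₀ hc₀
    have hxy' : ofDual y < ofDual x := ofDual_lt_ofDual.mpr hxy
    obtain ⟨c₁, hc₁, hi₁⟩ := hp.hincEx _ _ hxy' k _ (satChain_unrev hc₀)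
    refine ⟨fun j => toDual (c₁ (k - j)), satChain_rev hc₁, inc_rev lab hi₁⟩
  · -- hincUniq
    intro x y k c d hc hic hd hid
    have H := hp.hincUniq _ _ k _ _ (satChain_unrev hc) (inc_unrev lab hic)
      (satChain_unrev hd) (inc_unrev lab hid)
    funext j
    rcases le_or_gt j k with hj | hj
    · have h1 := congrFun H (k - j)
      have e : k - (k - j) = j := by omega
      rw [e] at h1
      exact h1
    · rw [hc.2.1 j hj.le, hd.2.1 j hj.le]

/-- Transfer of label sets to the dual. -/
theorem F_dual_eq (hp : Pack rk lab) (hbound : ∀ x : P, rk x ≤ n) {a b : P} (hab : a ≤ b) :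
    Fset (dualLab lab) (toDual b) (toDual a) = (Fset lab a b).image (fun l => -l) := by
  obtain ⟨k, c, hc⟩ := exists_satChain hab
  rw [← labs_eq_F hp hc, ← labs_eq_F (dualPack hp hbound) (satChain_rev hc),
    labs_dual_eq lab]
  congr 1
  refine labs_congr lab fun t ht => ?_
  show ofDual (toDual (c (k - (k - t)))) = c t
  rw [ofDual_toDual, (by omega : k - (k - t) = t)]

end DualPack

end SnSS
namespace SnSS

section Main

open OrderDual

variable {L : Type*} [Lattice L] [BoundedOrder L] [Fintype L] {n : ℕ}
variable {rk : L → ℕ} {lab : L → L → ℤ}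

theorem full_distinct (hsn : IsSnELLabeling n lab) {M : ℕ → L} (hM : IsSatChain n M ⊥ ⊤) :
    ∀ i j, i < j → j < n → lab (M i) (M (i + 1)) ≠ lab (M j) (M (j + 1)) := by
  obtain ⟨σ, hσ⟩ := hsn.2 M hM
  intro i j hij hjn hEq
  have hi : lab (M i) (M (i + 1)) = ((σ ⟨i, by omega⟩ : ℕ) : ℤ) + 1 := hσ ⟨i, by omega⟩
  have hj : lab (M j) (M (j + 1)) = ((σ ⟨j, hjn⟩ : ℕ) : ℤ) + 1 := hσ ⟨j, hjn⟩
  rw [hi, hj] at hEq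
  have h1 : ((σ ⟨i, by omega⟩ : Fin n) : ℕ) = ((σ ⟨j, hjn⟩ : Fin n) : ℕ) := by omega
  have h2 : (⟨i, by omega⟩ : Fin n) = ⟨j, hjn⟩ := σ.injective (Fin.ext h1)
  rw [Fin.mk.injEq] at h2
  omega

theorem full_labs (hsn : IsSnELLabeling n lab) {M : ℕ → L} (hM : IsSatChain n M ⊥ ⊤) :
    labs lab n M = Finset.Icc 1 (n : ℤ) := by
  obtain ⟨σ, hσ⟩ := hsn.2 M hM
  ext a
  rw [mem_labs, Finset.mem_Icc]
  constructor
  · rintro ⟨j, hj, rfl⟩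
    have h : lab (M j) (M (j + 1)) = ((σ ⟨j, hj⟩ : ℕ) : ℤ) + 1 := hσ ⟨j, hj⟩
    have hv := (σ ⟨j, hj⟩).2
    rw [h]
    omega
  · rintro ⟨h1, h2⟩
    have hn0 : 0 < n := by omega
    set t : Fin n := ⟨(a - 1).toNat, by omega⟩ with ht
    refine ⟨(σ.symm t : ℕ), (σ.symm t).2, ?_⟩
    have h : lab (M (σ.symm t : ℕ)) (M ((σ.symm t : ℕ) + 1)) =
        ((σ (σ.symm t) : ℕ) : ℤ) + 1 := hσ (σ.symm t)
    rw [h, Equiv.apply_symm_apply]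
    have : ((t : ℕ) : ℤ) = a - 1 := by
      rw [ht]
      simp only [Fin.val_mk]
      omega
    rw [this]
    ring

variable (hg : IsGraded n rk) (hsn : IsSnELLabeling n lab)
include hg hsn

theorem interval_props {x y : L} {k : ℕ} {c : ℕ → L} (hc : IsSatChain k c x y) :
    (∀ i j, i < j → j < k → lab (c i) (c (i + 1)) ≠ lab (c j) (c (j + 1))) ∧
    (∀ d : ℕ → L, IsSatChain k d x y → labs lab k d = labs lab k c) ∧
    labs lab k c ⊆ Finset.Icc 1 (n : ℤ) := by
  have hcov : ∀ {u v : L}, u ⋖ v → rk v = rk u + 1 := fun h => hg.2.2 _ _ h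
  obtain ⟨p, A, hA⟩ := exists_satChain (bot_le : (⊥ : L) ≤ x)
  obtain ⟨s, B, hB⟩ := exists_satChain (le_top : y ≤ (⊤ : L))
  have hn : p + k + s = n := by
    have h1 := satChain_len hcov (satChain_splice (satChain_splice hA hc) hB)
    rw [hg.1] at h1
    rw [hg.2.1] at h1
    omega
  -- the sandwich of an arbitrary chain e of [x,y]
  have key : ∀ e : ℕ → L, IsSatChain k e x y →
      IsSatChain n (splice (p + k) (splice p A e) B) ⊥ ⊤ ∧
      (∀ i, i < k → lab (splice (p + k) (splice p A e) B (p + i))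
          (splice (p + k) (splice p A e) B (p + i + 1)) = lab (e i) (e (i + 1))) ∧
      (∀ i, i < p → lab (splice (p + k) (splice p A e) B i)
          (splice (p + k) (splice p A e) B (i + 1)) = lab (A i) (A (i + 1))) ∧
      (∀ i, i < s → lab (splice (p + k) (splice p A e) B (p + k + i))
          (splice (p + k) (splice p A e) B (p + k + i + 1)) = lab (B i) (B (i + 1))) := by
    intro e he
    have hE := satChain_splice hA he
    have hM := satChain_splice hE hB
    refine ⟨hn ▸ hM, fun i hi => ?_, fun i hi => ?_, fun i hi => ?_⟩
    · have e1 : splice (p + k) (splice p A e) B (p + i) = e i := by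
        rw [splice_eval_le hE hB (by omega), splice_eval_ge (by omega : p ≤ p + i),
          (by omega : p + i - p = i)]
      have e2 : splice (p + k) (splice p A e) B (p + i + 1) = e (i + 1) := by
        rw [splice_eval_le hE hB (by omega), splice_eval_ge (by omega : p ≤ p + i + 1),
          (by omega : p + i + 1 - p = i + 1)]
      rw [e1, e2]
    · have e1 : splice (p + k) (splice p A e) B i = A i := by
        rw [splice_eval_le hE hB (by omega), splice_eval_le hA he (by omega)]
      have e2 : splice (p + k) (splice p A e) B (i + 1) = A (i + 1) := by
        rw [splice_eval_le hE hB (by omega), splice_eval_le hA he (by omega)]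
      rw [e1, e2]
    · have e1 : splice (p + k) (splice p A e) B (p + k + i) = B i := by
        rw [splice_eval_ge (by omega : p + k ≤ p + k + i), (by omega : p + k + i - (p + k) = i)]
      have e2 : splice (p + k) (splice p A e) B (p + k + i + 1) = B (i + 1) := by
        rw [splice_eval_ge (by omega : p + k ≤ p + k + i + 1),
          (by omega : p + k + i + 1 - (p + k) = i + 1)]
      rw [e1, e2]
  obtain ⟨hMc, hlc, hlcA, hlcB⟩ := key c hc
  have hdistM := full_distinct hsn hMc
  refine ⟨fun i j hij hjk hEq => ?_, fun d hd => ?_, fun a ha => ?_⟩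
  · exact hdistM (p + i) (p + j) (by omega) (by omega)
      (by rw [hlc i (by omega), hlc j (by omega)]; exact hEq)
  · -- invariance
    obtain ⟨hMd, hld, hldA, hldB⟩ := key d hd
    have hdistMd := full_distinct hsn hMd
    have hIc := full_labs hsn hMc
    have hId := full_labs hsn hMd
    -- a ∈ labs k e → a ∉ labs p A ∧ a ∉ labs s B  (via distinctness of sandwich of e)
    have excl : ∀ (e : ℕ → L) (he : IsSatChain k e x y), ∀ a ∈ labs lab k e,
        a ∉ labs lab p A ∧ a ∉ labs lab s B := by
      intro e he a hae
      obtain ⟨hMe, hle, hleA, hleB⟩ := key e he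
      have hdistMe := full_distinct hsn hMe
      rw [mem_labs] at hae
      obtain ⟨i, hik, hia⟩ := hae
      constructor
      · intro haA
        rw [mem_labs] at haA
        obtain ⟨j, hjp, hja⟩ := haA
        exact hdistMe j (p + i) (by omega) (by omega)
          (by rw [hleA j hjp, hle i hik, hja, hia])
      · intro haB
        rw [mem_labs] at haB
        obtain ⟨j, hjs, hja⟩ := haB
        exact hdistMe (p + i) (p + k + j) (by omega) (by omega)
          (by rw [hleB j hjs, hle i hik, hja, hia])
    have hun : ∀ (e : ℕ → L) (he : IsSatChain k e x y),
        labs lab p A ∪ labs lab k e ∪ labs lab s B = Finset.Icc 1 (n : ℤ) := by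
      intro e he
      obtain ⟨hMe, _, _, _⟩ := key e he
      have := full_labs hsn hMe
      rw [← this]
      have h1 : labs lab n (splice (p + k) (splice p A e) B)
          = labs lab (p + k + s) (splice (p + k) (splice p A e) B) := by rw [hn]
      rw [h1, labs_splice lab (satChain_splice hA he) hB, labs_splice lab hA he]
    ext a
    constructor
    · intro ha
      have h1 : a ∈ Finset.Icc 1 (n : ℤ) := by
        rw [← hun d hd]
        exact Finset.mem_union_left _ (Finset.mem_union_right _ ha)
      rw [← hun c hc] at h1
      obtain ⟨hnA, hnB⟩ := excl d hd a ha
      rcases Finset.mem_union.mp h1 with h2 | h2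
      · rcases Finset.mem_union.mp h2 with h3 | h3
        · exact absurd h3 hnA
        · exact h3
      · exact absurd h2 hnB
    · intro ha
      have h1 : a ∈ Finset.Icc 1 (n : ℤ) := by
        rw [← hun c hc]
        exact Finset.mem_union_left _ (Finset.mem_union_right _ ha)
      rw [← hun d hd] at h1
      obtain ⟨hnA, hnB⟩ := excl c hc a ha
      rcases Finset.mem_union.mp h1 with h2 | h2
      · rcases Finset.mem_union.mp h2 with h3 | h3
        · exact absurd h3 hnA
        · exact h3
      · exact absurd h2 hnB
  · -- range
    have hIc := full_labs hsn hMc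
    rw [← hIc]
    rw [mem_labs] at ha
    obtain ⟨i, hik, hia⟩ := ha
    rw [mem_labs]
    exact ⟨p + i, by omega, by rw [hlc i hik, hia]⟩

theorem mkPack : Pack rk lab := by
  constructor
  · exact fun h => hg.2.2 _ _ h
  · intro x y k c d hc hd
    rw [(interval_props hg hsn hd).2.1 c hc]
  · intro x y k c hc
    exact (interval_props hg hsn hc).1
  · intro x y hxy k c₀ hc₀
    obtain ⟨c, hc⟩ := (hsn.1 x y hxy k ⟨c₀, hc₀⟩).1.exists
    exact ⟨c, hc.1, hc.2⟩
  · intro x y k c d hc hic hd hid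
    rcases Nat.eq_zero_or_pos k with rfl | hk
    · funext j
      rw [hc.2.1 j (by omega), hd.2.1 j (by omega)]
    · have hxy : x < y := by
        have h1 : c 0 ⋖ c 1 := hc.2.2 0 hk
        have h2 := satChain_le_top hc 1
        rw [hc.1] at h1
        exact lt_of_lt_of_le h1.lt h2
      exact (hsn.1 x y hxy k ⟨c, hc⟩).1.unique ⟨hc, hic⟩ ⟨hd, hid⟩

theorem F_range {x y : L} (hxy : x ≤ y) : Fset lab x y ⊆ Finset.Icc 1 (n : ℤ) := by
  obtain ⟨k, c, hc⟩ := exists_satChain hxy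
  rw [← labs_eq_F (mkPack hg hsn) hc]
  exact (interval_props hg hsn hc).2.2

end Main

end SnSS
namespace SnSS

section SLaws

open OrderDual

variable {L : Type*} [Lattice L] [BoundedOrder L] [Fintype L] {n : ℕ}
variable {rk : L → ℕ} {lab : L → L → ℤ}
variable (hg : IsGraded n rk) (hsn : IsSnELLabeling n lab)
variable (m0 : MaxChain n L) (hm0 : ∀ j, j < n → lab (m0.1 j) (m0.1 (j + 1)) = (j : ℤ) + 1)

include hg hsn hm0

theorem S_xi {i : ℕ} (hi : i ≤ n) :
    Fset lab ⊥ (m0.1 i) = Finset.Icc 1 (i : ℤ) := by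
  have hhead := satChain_head m0.2 hi
  rw [← labs_eq_F (mkPack hg hsn) hhead]
  ext a
  rw [mem_labs, Finset.mem_Icc]
  constructor
  · rintro ⟨j, hj, rfl⟩
    show 1 ≤ lab (m0.1 (min j i)) (m0.1 (min (j + 1) i)) ∧ _
    rw [min_eq_left (by omega), min_eq_left (by omega), hm0 j (by omega)]
    omega
  · rintro ⟨h1, h2⟩
    refine ⟨(a - 1).toNat, by omega, ?_⟩
    show lab (m0.1 (min (a - 1).toNat i)) (m0.1 (min ((a - 1).toNat + 1) i)) = a
    rw [min_eq_left (by omega), min_eq_left (by omega), hm0 (a - 1).toNat (by omega)]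
    omega

theorem F_tail_gt {i : ℕ} (hi : i ≤ n) :
    ∀ a ∈ Fset lab (m0.1 i) ⊤, (i : ℤ) < a := by
  intro a ha
  have htail := satChain_tail m0.2 hi
  rw [← labs_eq_F (mkPack hg hsn) htail, mem_labs] at ha
  obtain ⟨j, hj, rfl⟩ := ha
  show (i : ℤ) < lab (m0.1 (i + j)) (m0.1 (i + j + 1))
  rw [hm0 (i + j) (by omega)]
  omega

theorem claim1a : ∀ i, i ≤ n → ∀ z : L,
    Fset lab z (z ⊔ m0.1 i) ⊆ Finset.Icc 1 (i : ℤ) := by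
  have hp := mkPack hg hsn
  intro i
  induction i with
  | zero =>
    intro _ z
    rw [m0.2.1, sup_bot_eq, F_self hp]
    exact Finset.empty_subset _
  | succ i ih =>
    intro hi1 z
    have hxw : m0.1 i ⋖ m0.1 (i + 1) := m0.2.2.2 i (by omega)
    have hlab : lab (m0.1 i) (m0.1 (i + 1)) = (i : ℤ) + 1 := hm0 i (by omega)
    have hmin : ∀ a ∈ Fset lab (m0.1 i) ⊤, lab (m0.1 i) (m0.1 (i + 1)) ≤ a := by
      intro a ha
      rw [hlab]
      have := F_tail_gt hg hsn m0 hm0 (by omega : i ≤ n) a ha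
      omega
    have hK := coreK hp (rk (z ⊔ m0.1 i)) hxw le_top le_sup_right le_top
      (Nat.le_add_left _ _) hmin
    have hzw : (z ⊔ m0.1 i) ⊔ m0.1 (i + 1) = z ⊔ m0.1 (i + 1) := by
      rw [sup_assoc, sup_eq_right.mpr hxw.le]
    rcases hK with h | ⟨h1, h2⟩
    · have heq : z ⊔ m0.1 (i + 1) = z ⊔ m0.1 i := by
        rw [← hzw, sup_eq_left.mpr h]
      rw [heq]
      exact (ih (by omega) z).trans (Finset.Icc_subset_Icc_right (by omega))
    · rw [hzw] at h1 h2
      have hsplit : Fset lab z (z ⊔ m0.1 (i + 1)) =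
          Fset lab z (z ⊔ m0.1 i) ∪ Fset lab (z ⊔ m0.1 i) (z ⊔ m0.1 (i + 1)) := by
        refine F_union hp le_sup_left ?_
        rw [← hzw]
        exact le_sup_left
      rw [hsplit]
      intro a ha
      rcases Finset.mem_union.mp ha with h | h
      · have := ih (by omega) z h
        rw [Finset.mem_Icc] at this ⊢
        refine ⟨this.1, ?_⟩
        push_cast
        omega
      · rw [F_cover hp h1, Finset.mem_singleton] at h
        rw [h, h2, hlab, Finset.mem_Icc]
        push_cast
        omega

theorem S_join {i : ℕ} (hi : i ≤ n) (z : L) :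
    Fset lab ⊥ (z ⊔ m0.1 i) = Finset.Icc 1 (i : ℤ) ∪ Fset lab ⊥ z := by
  have hp := mkPack hg hsn
  apply Finset.Subset.antisymm
  · rw [F_union hp bot_le (le_sup_left : z ≤ z ⊔ m0.1 i)]
    intro a ha
    rcases Finset.mem_union.mp ha with h | h
    · exact Finset.mem_union_right _ h
    · exact Finset.mem_union_left _ (claim1a hg hsn m0 hm0 i hi z h)
  · apply Finset.union_subset
    · rw [← S_xi hg hsn m0 hm0 hi]
      exact F_mono_right hp bot_le le_sup_right
    · exact F_mono_right hp bot_le le_sup_left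

theorem meet_labels : ∀ t, t ≤ n → ∀ z : L,
    ∀ a ∈ Fset lab (m0.1 (n - t) ⊓ z) z, ((n - t : ℕ) : ℤ) < a := by
  have hp := mkPack hg hsn
  have hbound : ∀ x : L, rk x ≤ n := by
    intro x
    have := rk_le_of_le hp.hcov (le_top : x ≤ ⊤)
    rw [hg.2.1] at this
    exact this
  have hpD := dualPack (n := n) hp hbound
  intro t
  induction t with
  | zero =>
    intro _ z a ha
    rw [Nat.sub_zero, m0.2.2.1 n le_rfl, top_inf_eq, F_self hp] at ha
    exact absurd ha (Finset.notMem_empty a)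
  | succ t ih =>
    intro ht z a ha
    set i := n - (t + 1) with hidef
    have hi1 : i + 1 = n - t := by omega
    have hin : i < n := by omega
    have hcovi : m0.1 i ⋖ m0.1 (i + 1) := m0.2.2.2 i hin
    have hlabi : lab (m0.1 i) (m0.1 (i + 1)) = (i : ℤ) + 1 := hm0 i hin
    set mz := m0.1 (i + 1) ⊓ z with hmz
    have hmin : ∀ b ∈ Fset (dualLab lab) (toDual (m0.1 (i + 1))) (toDual (⊥ : L)),
        dualLab lab (toDual (m0.1 (i + 1))) (toDual (m0.1 i)) ≤ b := by
      intro b hb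
      rw [F_dual_eq (n := n) hp hbound bot_le] at hb
      rw [Finset.mem_image] at hb
      obtain ⟨v, hv, rfl⟩ := hb
      rw [S_xi hg hsn m0 hm0 (by omega : i + 1 ≤ n), Finset.mem_Icc] at hv
      show -(lab (ofDual (toDual (m0.1 i))) (ofDual (toDual (m0.1 (i + 1))))) ≤ -v
      rw [ofDual_toDual, ofDual_toDual, hlabi]
      push_cast at hv ⊢
      omega
    have hK := coreK hpD n (x := toDual (m0.1 (i + 1))) (w := toDual (m0.1 i))
      (z := toDual mz) (y := toDual (⊥ : L))
      (toDual_covBy_toDual_iff.mpr hcovi)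
      (toDual_le_toDual.mpr bot_le)
      (toDual_le_toDual.mpr inf_le_left)
      (toDual_le_toDual.mpr bot_le)
      (by simp only [ofDual_toDual]; omega)
      hmin
    have hsupQ : toDual mz ⊔ toDual (m0.1 i) = toDual (m0.1 i ⊓ z) := by
      rw [← toDual_inf]
      congr 1
      rw [hmz, inf_comm, ← inf_assoc, inf_eq_left.mpr (satChain_le m0.2 i (i + 1) (by omega))]
    have hdecomp : m0.1 i ⊓ z ≤ mz := by
      rw [hmz]
      exact inf_le_inf_right z (satChain_le m0.2 i (i + 1) (by omega))
    have hIH : ∀ b ∈ Fset lab mz z, ((i : ℤ) + 1) ≤ b := by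
      intro b hb
      have h' : b ∈ Fset lab (m0.1 (n - t) ⊓ z) z := by
        rw [← hi1]; exact hb
      have h'' := ih (by omega) z b h'
      rw [← hi1] at h''
      push_cast at h''
      omega
    rcases hK with h | ⟨h1, h2⟩
    · -- mz ≤ m0 i, so m0 i ⊓ z = mz
      have hle : mz ≤ m0.1 i := toDual_le_toDual.mp h
      have heq : m0.1 i ⊓ z = mz := le_antisymm hdecomp (le_inf hle inf_le_right)
      rw [heq] at ha
      have := hIH a ha
      omega
    · rw [hsupQ] at h1 h2
      have hcovP : (m0.1 i ⊓ z) ⋖ mz := toDual_covBy_toDual_iff.mp h1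
      have hlabP : lab (m0.1 i ⊓ z) mz = (i : ℤ) + 1 := by
        have : -(lab (m0.1 i ⊓ z) mz) = -(lab (m0.1 i) (m0.1 (i + 1))) := h2
        rw [hlabi] at this
        omega
      have hsplit : Fset lab (m0.1 i ⊓ z) z =
          Fset lab (m0.1 i ⊓ z) mz ∪ Fset lab mz z :=
        F_union hp hdecomp inf_le_right
      rw [hsplit] at ha
      rcases Finset.mem_union.mp ha with h | h
      · rw [F_cover hp hcovP, Finset.mem_singleton] at h
        rw [h, hlabP]
        omega
      · have := hIH a h
        omega

theorem S_meet {i : ℕ} (hi : i ≤ n) (z : L) :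
    Fset lab ⊥ (m0.1 i ⊓ z) = Finset.Icc 1 (i : ℤ) ∩ Fset lab ⊥ z := by
  have hp := mkPack hg hsn
  apply Finset.Subset.antisymm
  · apply Finset.subset_inter
    · rw [← S_xi hg hsn m0 hm0 hi]
      exact F_mono_right hp bot_le inf_le_left
    · exact F_mono_right hp bot_le inf_le_right
  · intro a ha
    rw [Finset.mem_inter] at ha
    obtain ⟨h1, h2⟩ := ha
    rw [F_union hp (bot_le : (⊥:L) ≤ m0.1 i ⊓ z) inf_le_right, Finset.mem_union] at h2
    rcases h2 with h2 | h2
    · exact h2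
    · exfalso
      have := meet_labels hg hsn m0 hm0 (n - i) (by omega) z a
        (by rw [(by omega : n - (n - i) = i)]; exact h2)
      rw [Finset.mem_Icc] at h1
      omega

end SLaws

end SnSS
namespace SnSS

section Assembly

open OrderDual

variable {L : Type*} [Lattice L] [BoundedOrder L] [Fintype L] {n : ℕ}

/-- `m0.1 a ⊓ y` for a pair `(a, y)`. -/
def termF (m0 : MaxChain n L) (p : ℕ × L) : L := m0.1 p.1 ⊓ p.2

/-- Join of the terms of a list of pairs. -/
def joinL (m0 : MaxChain n L) (ws : List (ℕ × L)) : L :=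
  (ws.map (termF m0)).foldr (· ⊔ ·) ⊥

/-- Predicted label set of `joinL`. -/
noncomputable def SU (lab : L → L → ℤ) (m0 : MaxChain n L) (ws : List (ℕ × L)) : Finset ℤ :=
  (ws.map (fun p => Finset.Icc 1 (p.1 : ℤ) ∩ Fset lab ⊥ p.2)).foldr (· ∪ ·) ∅

theorem joinL_nil (m0 : MaxChain n L) : joinL m0 [] = ⊥ := rfl

theorem joinL_cons (m0 : MaxChain n L) (p : ℕ × L) (ws : List (ℕ × L)) :
    joinL m0 (p :: ws) = termF m0 p ⊔ joinL m0 ws := rfl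

theorem SU_nil (lab : L → L → ℤ) (m0 : MaxChain n L) : SU lab m0 [] = ∅ := rfl

theorem SU_cons (lab : L → L → ℤ) (m0 : MaxChain n L) (p : ℕ × L) (ws : List (ℕ × L)) :
    SU lab m0 (p :: ws) = (Finset.Icc 1 (p.1 : ℤ) ∩ Fset lab ⊥ p.2) ∪ SU lab m0 ws := rfl

theorem joinL_append (m0 : MaxChain n L) (ws₁ ws₂ : List (ℕ × L)) :
    joinL m0 (ws₁ ++ ws₂) = joinL m0 ws₁ ⊔ joinL m0 ws₂ := by
  induction ws₁ with
  | nil => rw [List.nil_append, joinL_nil, bot_sup_eq]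
  | cons p t ih =>
    rw [List.cons_append, joinL_cons, joinL_cons, ih, sup_assoc]

theorem SU_append (lab : L → L → ℤ) (m0 : MaxChain n L) (ws₁ ws₂ : List (ℕ × L)) :
    SU lab m0 (ws₁ ++ ws₂) = SU lab m0 ws₁ ∪ SU lab m0 ws₂ := by
  induction ws₁ with
  | nil => rw [List.nil_append, SU_nil, Finset.empty_union]
  | cons p t ih =>
    rw [List.cons_append, SU_cons, SU_cons, ih, Finset.union_assoc]

theorem joinL_perm (m0 : MaxChain n L) {ws₁ ws₂ : List (ℕ × L)} (h : ws₁.Perm ws₂) :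
    joinL m0 ws₁ = joinL m0 ws₂ := by
  induction h with
  | nil => rfl
  | cons x h ih => rw [joinL_cons, joinL_cons, ih]
  | swap x y l =>
    rw [joinL_cons, joinL_cons, joinL_cons, joinL_cons, sup_left_comm]
  | trans h1 h2 ih1 ih2 => rw [ih1, ih2]

theorem SU_perm (lab : L → L → ℤ) (m0 : MaxChain n L) {ws₁ ws₂ : List (ℕ × L)}
    (h : ws₁.Perm ws₂) : SU lab m0 ws₁ = SU lab m0 ws₂ := by
  induction h with
  | nil => rfl
  | cons x h ih => rw [SU_cons, SU_cons, ih]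
  | swap x y l =>
    rw [SU_cons, SU_cons, SU_cons, SU_cons]
    exact Finset.union_left_comm _ _ _
  | trans h1 h2 ih1 ih2 => rw [ih1, ih2]

theorem joinL_le (m0 : MaxChain n L) {ws : List (ℕ × L)} {v : L}
    (h : ∀ p ∈ ws, termF m0 p ≤ v) : joinL m0 ws ≤ v := by
  induction ws with
  | nil => exact bot_le
  | cons p t ih =>
    rw [joinL_cons]
    exact sup_le (h p (List.mem_cons_self)) (ih fun q hq => h q (List.mem_cons_of_mem p hq))

theorem le_joinL (m0 : MaxChain n L) {ws : List (ℕ × L)} {p : ℕ × L} (hp : p ∈ ws) :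
    termF m0 p ≤ joinL m0 ws := by
  induction ws with
  | nil => exact absurd hp (List.not_mem_nil)
  | cons q t ih =>
    rw [joinL_cons]
    rcases List.mem_cons.mp hp with rfl | h
    · exact le_sup_left
    · exact le_trans (ih h) le_sup_right

theorem chain_comp {c : Set L} (hc : IsChain (· ≤ ·) c) :
    ∀ u v : L, (u ∈ c ∨ u = ⊤) → (v ∈ c ∨ v = ⊤) → u ≤ v ∨ v ≤ u := by
  intro u v hu hv
  rcases hu with hu | rfl
  · rcases hv with hv | rfl
    · by_cases huv : u = v
      · exact Or.inl (le_of_eq huv)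
      · exact hc hu hv huv
    · exact Or.inl le_top
  · exact Or.inr le_top

/-- The list of pairwise meets. -/
def pairsL (ws₁ ws₂ : List (ℕ × L)) : List (ℕ × L) :=
  ws₁.flatMap fun p => ws₂.map fun q => (min p.1 q.1, p.2 ⊓ q.2)

/-- Extract an element with maximal second coordinate from a nonempty list of pairs
whose second coordinates are pairwise comparable. -/
theorem exists_max_pair {c : Set L} (hc : IsChain (· ≤ ·) c) :
    ∀ ws : List (ℕ × L), ws ≠ [] → (∀ p ∈ ws, p.2 ∈ c ∨ p.2 = ⊤) →
    ∃ p ws', ws.Perm (p :: ws') ∧ (∀ q ∈ ws', q.2 ≤ p.2) := by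
  have hcomp := chain_comp hc
  intro ws
  induction ws with
  | nil => intro h; exact absurd rfl h
  | cons p t ih =>
    intro _ hmem
    rcases eq_or_ne t [] with rfl | ht
    · exact ⟨p, [], List.Perm.refl _, by simp⟩
    · obtain ⟨q, t', hperm, hmax⟩ := ih ht fun r hr => hmem r (List.mem_cons_of_mem p hr)
      have hq : q.2 ∈ c ∨ q.2 = ⊤ := by
        have : q ∈ t := (hperm.mem_iff).mpr (List.mem_cons_self)
        exact hmem q (List.mem_cons_of_mem p this)
      have hpm : p.2 ∈ c ∨ p.2 = ⊤ := hmem p (List.mem_cons_self)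
      rcases hcomp p.2 q.2 hpm hq with h | h
      · refine ⟨q, p :: t', ?_, ?_⟩
        · exact (hperm.cons p).trans (List.Perm.swap q p t')
        · intro r hr
          rcases List.mem_cons.mp hr with rfl | hr'
          · exact h
          · exact hmax r hr'
      · refine ⟨p, t, List.Perm.refl _, ?_⟩
        intro r hr
        have : r ∈ q :: t' := (hperm.mem_iff).mp hr
        rcases List.mem_cons.mp this with rfl | hr'
        · exact h
        · exact le_trans (hmax r hr') h

end Assembly

end SnSS
namespace SnSS

section Final

open OrderDual

variable {L : Type*} [Lattice L] [BoundedOrder L] [Fintype L] {n : ℕ}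
variable {rk : L → ℕ} {lab : L → L → ℤ}
variable (hg : IsGraded n rk) (hsn : IsSnELLabeling n lab)
variable (m0 : MaxChain n L) (hm0 : ∀ j, j < n → lab (m0.1 j) (m0.1 (j + 1)) = (j : ℤ) + 1)

include hg hsn

theorem S_card' (z : L) : (Fset lab ⊥ z).card = rk z := by
  rw [F_card (mkPack hg hsn) bot_le, hg.1, Nat.sub_zero]

theorem eq_of_le_S {z z' : L} (hle : z ≤ z') (hS : Fset lab ⊥ z' ⊆ Fset lab ⊥ z) :
    z = z' := by
  refine eq_of_le_of_rk_le (mkPack hg hsn).hcov hle ?_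
  rw [← S_card' hg hsn, ← S_card' hg hsn]
  exact Finset.card_le_card hS

include hm0

theorem joinLaw {a : ℕ} (ha : a ≤ n) {y z : L} (hzy : z ≤ y) :
    Fset lab ⊥ ((m0.1 a ⊓ y) ⊔ z) =
      (Finset.Icc 1 (a : ℤ) ∩ Fset lab ⊥ y) ∪ Fset lab ⊥ z := by
  have hp := mkPack hg hsn
  apply Finset.Subset.antisymm
  · intro b hb
    have hub : (m0.1 a ⊓ y) ⊔ z ≤ (z ⊔ m0.1 a) ⊓ y :=
      sup_le (le_inf (le_trans inf_le_left le_sup_right) inf_le_right)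
        (le_inf le_sup_left hzy)
    have h1 : b ∈ Fset lab ⊥ ((z ⊔ m0.1 a) ⊓ y) := F_mono_right hp bot_le hub hb
    have h2 : b ∈ Fset lab ⊥ (z ⊔ m0.1 a) := F_mono_right hp bot_le inf_le_left h1
    have h3 : b ∈ Fset lab ⊥ y := F_mono_right hp bot_le inf_le_right h1
    rw [S_join hg hsn m0 hm0 ha z] at h2
    rcases Finset.mem_union.mp h2 with h4 | h4
    · exact Finset.mem_union_left _ (Finset.mem_inter.mpr ⟨h4, h3⟩)
    · exact Finset.mem_union_right _ h4
  · apply Finset.union_subset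
    · rw [← S_meet hg hsn m0 hm0 ha y]
      exact F_mono_right hp bot_le le_sup_left
    · exact F_mono_right hp bot_le le_sup_right

theorem claimJ {c : Set L} (hc : IsChain (· ≤ ·) c) :
    ∀ N, ∀ ws : List (ℕ × L), ws.length ≤ N →
      (∀ p ∈ ws, p.1 ≤ n ∧ (p.2 ∈ c ∨ p.2 = ⊤)) →
      Fset lab ⊥ (joinL m0 ws) = SU lab m0 ws := by
  have hp := mkPack hg hsn
  intro N
  induction N with
  | zero =>
    intro ws hlen _
    have hws : ws = [] := List.length_eq_zero_iff.mp (by omega)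
    subst hws
    rw [joinL_nil, SU_nil, F_self hp]
  | succ N ih =>
    intro ws hlen hmem
    rcases eq_or_ne ws [] with rfl | hne
    · rw [joinL_nil, SU_nil, F_self hp]
    · obtain ⟨p, ws', hperm, hmax⟩ :=
        exists_max_pair hc ws hne (fun q hq => (hmem q hq).2)
      rw [joinL_perm m0 hperm, SU_perm lab m0 hperm, joinL_cons, SU_cons]
      have hlen' : ws'.length ≤ N := by
        have := hperm.length_eq
        simp only [List.length_cons] at this
        omega
      have hmem' : ∀ q ∈ ws', q.1 ≤ n ∧ (q.2 ∈ c ∨ q.2 = ⊤) := fun q hq =>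
        hmem q (hperm.mem_iff.mpr (List.mem_cons_of_mem p hq))
      have hzy : joinL m0 ws' ≤ p.2 :=
        joinL_le m0 fun q hq => le_trans inf_le_right (hmax q hq)
      have hpa : p.1 ≤ n := (hmem p (hperm.mem_iff.mpr (List.mem_cons_self))).1
      show Fset lab ⊥ ((m0.1 p.1 ⊓ p.2) ⊔ joinL m0 ws') = _
      rw [joinLaw hg hsn m0 hm0 hpa hzy, ih ws' hlen' hmem']

theorem cell_inter {a b : ℕ} {y y' : L} (hcomp : y ≤ y' ∨ y' ≤ y) :
    (Finset.Icc 1 (a : ℤ) ∩ Fset lab ⊥ y) ∩ (Finset.Icc 1 (b : ℤ) ∩ Fset lab ⊥ y') =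
      Finset.Icc 1 ((min a b : ℕ) : ℤ) ∩ Fset lab ⊥ (y ⊓ y') := by
  have hp := mkPack hg hsn
  have hIcc : Finset.Icc (1 : ℤ) (a : ℤ) ∩ Finset.Icc 1 (b : ℤ) =
      Finset.Icc 1 ((min a b : ℕ) : ℤ) := by
    ext v
    simp only [Finset.mem_inter, Finset.mem_Icc]
    push_cast
    omega
  have hSS : Fset lab ⊥ y ∩ Fset lab ⊥ y' = Fset lab ⊥ (y ⊓ y') := by
    rcases hcomp with h | h
    · rw [inf_eq_left.mpr h]
      exact Finset.inter_eq_left.mpr (F_mono_right hp bot_le h)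
    · rw [inf_eq_right.mpr h]
      exact Finset.inter_eq_right.mpr (F_mono_right hp bot_le h)
  have hreassoc : (Finset.Icc 1 (a : ℤ) ∩ Fset lab ⊥ y) ∩
      (Finset.Icc 1 (b : ℤ) ∩ Fset lab ⊥ y') =
      (Finset.Icc (1 : ℤ) (a : ℤ) ∩ Finset.Icc 1 (b : ℤ)) ∩
      (Fset lab ⊥ y ∩ Fset lab ⊥ y') := by
    ext v
    simp only [Finset.mem_inter]
    tauto
  rw [hreassoc, hIcc, hSS]

theorem SU_pairs {c : Set L} (hc : IsChain (· ≤ ·) c) :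
    ∀ ws₁ ws₂ : List (ℕ × L),
      (∀ p ∈ ws₁, p.1 ≤ n ∧ (p.2 ∈ c ∨ p.2 = ⊤)) →
      (∀ p ∈ ws₂, p.1 ≤ n ∧ (p.2 ∈ c ∨ p.2 = ⊤)) →
      SU lab m0 (pairsL ws₁ ws₂) = SU lab m0 ws₁ ∩ SU lab m0 ws₂ := by
  intro ws₁
  induction ws₁ with
  | nil =>
    intro ws₂ _ _
    rw [SU_nil, Finset.empty_inter]
    rfl
  | cons p t ih =>
    intro ws₂ hmem₁ hmem₂
    have hstep : pairsL (p :: t) ws₂ =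
        (ws₂.map fun q => (min p.1 q.1, p.2 ⊓ q.2)) ++ pairsL t ws₂ := by
      simp [pairsL]
    rw [hstep, SU_append, SU_cons,
      ih ws₂ (fun q hq => hmem₁ q (List.mem_cons_of_mem p hq)) hmem₂,
      Finset.union_inter_distrib_right]
    congr 1
    -- single row
    have hpmem := hmem₁ p (List.mem_cons_self)
    clear hstep ih hmem₁
    induction ws₂ with
    | nil =>
      rw [List.map_nil, SU_nil, Finset.inter_empty]
    | cons q u ih2 =>
      rw [List.map_cons, SU_cons, SU_cons, Finset.inter_union_distrib_left,
        ih2 (fun r hr => hmem₂ r (List.mem_cons_of_mem q hr))]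
      congr 1
      have hq := hmem₂ q (List.mem_cons_self)
      exact (cell_inter hg hsn m0 hm0 (chain_comp hc _ _ hpmem.2 hq.2)).symm

theorem meet_form {c : Set L} (hc : IsChain (· ≤ ·) c)
    (ws₁ ws₂ : List (ℕ × L))
    (hmem₁ : ∀ p ∈ ws₁, p.1 ≤ n ∧ (p.2 ∈ c ∨ p.2 = ⊤))
    (hmem₂ : ∀ p ∈ ws₂, p.1 ≤ n ∧ (p.2 ∈ c ∨ p.2 = ⊤)) :
    joinL m0 ws₁ ⊓ joinL m0 ws₂ = joinL m0 (pairsL ws₁ ws₂) := by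
  have hp := mkPack hg hsn
  have hmemP : ∀ r ∈ pairsL ws₁ ws₂, r.1 ≤ n ∧ (r.2 ∈ c ∨ r.2 = ⊤) := by
    intro r hr
    rw [pairsL, List.mem_flatMap] at hr
    obtain ⟨p, hpm, hr⟩ := hr
    rw [List.mem_map] at hr
    obtain ⟨q, hqm, rfl⟩ := hr
    refine ⟨le_trans (min_le_left _ _) (hmem₁ p hpm).1, ?_⟩
    rcases chain_comp hc _ _ (hmem₁ p hpm).2 (hmem₂ q hqm).2 with h | h
    · rw [inf_eq_left.mpr h]; exact (hmem₁ p hpm).2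
    · rw [inf_eq_right.mpr h]; exact (hmem₂ q hqm).2
  have hle : joinL m0 (pairsL ws₁ ws₂) ≤ joinL m0 ws₁ ⊓ joinL m0 ws₂ := by
    apply joinL_le
    intro r hr
    rw [pairsL, List.mem_flatMap] at hr
    obtain ⟨p, hpm, hr⟩ := hr
    rw [List.mem_map] at hr
    obtain ⟨q, hqm, rfl⟩ := hr
    refine le_inf (le_trans ?_ (le_joinL m0 hpm)) (le_trans ?_ (le_joinL m0 hqm))
    · show m0.1 (min p.1 q.1) ⊓ (p.2 ⊓ q.2) ≤ m0.1 p.1 ⊓ p.2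
      exact inf_le_inf (satChain_le m0.2 _ _ (min_le_left _ _)) inf_le_left
    · show m0.1 (min p.1 q.1) ⊓ (p.2 ⊓ q.2) ≤ m0.1 q.1 ⊓ q.2
      exact inf_le_inf (satChain_le m0.2 _ _ (min_le_right _ _)) inf_le_right
  have hS : Fset lab ⊥ (joinL m0 ws₁ ⊓ joinL m0 ws₂) ⊆
      Fset lab ⊥ (joinL m0 (pairsL ws₁ ws₂)) := by
    intro b hb
    have h1 : b ∈ Fset lab ⊥ (joinL m0 ws₁) := F_mono_right hp bot_le inf_le_left hb
    have h2 : b ∈ Fset lab ⊥ (joinL m0 ws₂) := F_mono_right hp bot_le inf_le_right hb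
    rw [claimJ hg hsn m0 hm0 hc ws₁.length ws₁ le_rfl hmem₁] at h1
    rw [claimJ hg hsn m0 hm0 hc ws₂.length ws₂ le_rfl hmem₂] at h2
    rw [claimJ hg hsn m0 hm0 hc (pairsL ws₁ ws₂).length _ le_rfl hmemP,
      SU_pairs hg hsn m0 hm0 hc ws₁ ws₂ hmem₁ hmem₂]
    exact Finset.mem_inter.mpr ⟨h1, h2⟩
  exact (eq_of_le_S hg hsn hle hS).symm

end Final

end SnSS
open SnSS in
/-- Every finite graded lattice of rank `n` with an `S_n` EL-labeling
is supersolvable, the unique maximal chain labeled by the identity permutation serving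
as an M-chain. -/
theorem snellable_implies_supersolvable {L : Type*} [Lattice L] [BoundedOrder L]
    [Fintype L] {n : ℕ} (rk : L → ℕ) (hg : IsGraded n rk)
    (lab : L → L → ℤ) (hsn : IsSnELLabeling n lab)
    (m0 : MaxChain n L) (hm0 : ∀ j, j < n → lab (m0.1 j) (m0.1 (j + 1)) = (j : ℤ) + 1) :
    Supersolvable n L ∧
      ∀ c : Set L, IsChain (· ≤ ·) c → DistribOn (genSub (Set.range m0.1 ∪ c)) := by
  have key : ∀ c : Set L, IsChain (· ≤ ·) c → DistribOn (genSub (Set.range m0.1 ∪ c)) := by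
    intro c hc
    set GG : Set L := {z | ∃ ws : List (ℕ × L),
      (∀ p ∈ ws, p.1 ≤ n ∧ (p.2 ∈ c ∨ p.2 = ⊤)) ∧ joinL m0 ws = z} with hGGdef
    have m0top : m0.1 n = ⊤ := m0.2.2.1 n le_rfl
    have hsub : Set.range m0.1 ∪ c ⊆ GG := by
      intro z hz
      rcases hz with ⟨j, rfl⟩ | hz
      · rcases le_or_gt j n with hj | hj
        · refine ⟨[(j, ⊤)], ?_, ?_⟩
          · intro p hp
            rw [List.mem_singleton] at hp
            subst hp
            exact ⟨hj, Or.inr rfl⟩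
          · show (m0.1 j ⊓ ⊤) ⊔ ⊥ = m0.1 j
            rw [inf_top_eq, sup_bot_eq]
        · refine ⟨[(n, ⊤)], ?_, ?_⟩
          · intro p hp
            rw [List.mem_singleton] at hp
            subst hp
            exact ⟨le_rfl, Or.inr rfl⟩
          · show (m0.1 n ⊓ ⊤) ⊔ ⊥ = m0.1 j
            rw [inf_top_eq, sup_bot_eq, m0top, m0.2.2.1 j hj.le]
      · refine ⟨[(n, z)], ?_, ?_⟩
        · intro p hp
          rw [List.mem_singleton] at hp
          subst hp
          exact ⟨le_rfl, Or.inl hz⟩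
        · show (m0.1 n ⊓ z) ⊔ ⊥ = z
          rw [m0top, top_inf_eq, sup_bot_eq]
    have hSup : ∀ u v : L, u ∈ GG → v ∈ GG → (u ⊔ v ∈ GG ∧
        Fset lab ⊥ (u ⊔ v) = Fset lab ⊥ u ∪ Fset lab ⊥ v) := by
      rintro u v ⟨ws₁, hm₁, rfl⟩ ⟨ws₂, hm₂, rfl⟩
      have happ := joinL_append m0 ws₁ ws₂
      have hmapp : ∀ p ∈ ws₁ ++ ws₂, p.1 ≤ n ∧ (p.2 ∈ c ∨ p.2 = ⊤) := by
        intro p hp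
        rcases List.mem_append.mp hp with h | h
        · exact hm₁ p h
        · exact hm₂ p h
      refine ⟨⟨ws₁ ++ ws₂, hmapp, happ⟩, ?_⟩
      rw [← happ, claimJ hg hsn m0 hm0 hc _ _ le_rfl hmapp, SU_append,
        claimJ hg hsn m0 hm0 hc _ _ le_rfl hm₁, claimJ hg hsn m0 hm0 hc _ _ le_rfl hm₂]
    have hInf : ∀ u v : L, u ∈ GG → v ∈ GG → (u ⊓ v ∈ GG ∧
        Fset lab ⊥ (u ⊓ v) = Fset lab ⊥ u ∩ Fset lab ⊥ v) := by
      rintro u v ⟨ws₁, hm₁, rfl⟩ ⟨ws₂, hm₂, rfl⟩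
      have hmf := meet_form hg hsn m0 hm0 hc ws₁ ws₂ hm₁ hm₂
      have hmemP : ∀ r ∈ pairsL ws₁ ws₂, r.1 ≤ n ∧ (r.2 ∈ c ∨ r.2 = ⊤) := by
        intro r hr
        rw [pairsL, List.mem_flatMap] at hr
        obtain ⟨p, hpm, hr⟩ := hr
        rw [List.mem_map] at hr
        obtain ⟨q, hqm, rfl⟩ := hr
        refine ⟨le_trans (min_le_left _ _) (hm₁ p hpm).1, ?_⟩
        rcases chain_comp hc _ _ (hm₁ p hpm).2 (hm₂ q hqm).2 with h | h
        · rw [inf_eq_left.mpr h]; exact (hm₁ p hpm).2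
        · rw [inf_eq_right.mpr h]; exact (hm₂ q hqm).2
      refine ⟨⟨pairsL ws₁ ws₂, hmemP, hmf.symm⟩, ?_⟩
      rw [hmf, claimJ hg hsn m0 hm0 hc _ _ le_rfl hmemP,
        SU_pairs hg hsn m0 hm0 hc ws₁ ws₂ hm₁ hm₂,
        claimJ hg hsn m0 hm0 hc _ _ le_rfl hm₁, claimJ hg hsn m0 hm0 hc _ _ le_rfl hm₂]
    have hclosed : SublClosed GG := fun a ha b hb =>
      ⟨(hSup a b ha hb).1, (hInf a b ha hb).1⟩
    have hgen : genSub (Set.range m0.1 ∪ c) ⊆ GG := by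
      unfold genSub
      exact Set.sInter_subset_of_mem ⟨hsub, hclosed⟩
    intro a ha b hb d hd
    have ha' := hgen ha
    have hb' := hgen hb
    have hd' := hgen hd
    obtain ⟨hbdG, hbdS⟩ := hSup b d hb' hd'
    obtain ⟨habG, habS⟩ := hInf a b ha' hb'
    obtain ⟨hadG, hadS⟩ := hInf a d ha' hd'
    obtain ⟨h1G, h1S⟩ := hInf a (b ⊔ d) ha' hbdG
    obtain ⟨h2G, h2S⟩ := hSup (a ⊓ b) (a ⊓ d) habG hadG
    have hSeq : Fset lab ⊥ (a ⊓ (b ⊔ d)) = Fset lab ⊥ ((a ⊓ b) ⊔ (a ⊓ d)) := by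
      rw [h1S, hbdS, h2S, habS, hadS, Finset.inter_union_distrib_left]
    have hle2 : (a ⊓ b) ⊔ (a ⊓ d) ≤ a ⊓ (b ⊔ d) :=
      sup_le (le_inf inf_le_left (le_trans inf_le_right le_sup_left))
        (le_inf inf_le_left (le_trans inf_le_right le_sup_right))
    refine (eq_of_le_S hg hsn hle2 ?_).symm
    rw [hSeq]
  exact ⟨⟨m0, key⟩, key⟩
end
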